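/- arXiv:2511.18263 — 8 statements merged into one kernel-verified Lean document; each statement's English description precedes it below -/
import Mathlib

section
/- The feasible sets of the Degree Bounded Matroid Independent Set problem form a (Δ+1)-extendible independence system: if A ⊆ B are feasible, x ∉ B, and A + x is feasible, then there exists Z ⊆ B \ A with |Z| ≤ Δ+1 such that (B + x) \ Z is feasible. -/
open scoped Classical

/-- Feasibility for the Degree Bounded Matroid Independent Set problem:
`S` is independent in the matroid `M` and respects the upper bound `g e`
on every hyperedge `e` of the hypergraph `H`. -/
def DBMISFeasible {V : Type*} (M : Matroid V) (H : Finset (Finset V))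
    (g : Finset V → ℕ) (S : Finset V) : Prop :=
  M.Indep ↑S ∧ ∀ e ∈ H, (S ∩ e).card ≤ g e

/-! An element `x` added to `B` can overload only the matroid (by at most one circuit, the
fundamental circuit of `x` in `B`) and the at most `Δ` hyperedges through `x`. The fundamental
circuit is not contained in the independent set `A + x`, so it has an element of `B \ A`
whose removal restores independence. A hyperedge `e ∋ x` is violated only if it is tight for
`B`; as `A + x` respects `e`, tightness forces an element of `(B ∩ e) \ A`, and removing it
restores the bound on `e`. -/

section

open Finset

variable {V : Type*}

namespace Matroid

variable {M : Matroid V} {I J : Set V} {x : V}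

theorem Indep.exists_mem_sdiff_indep_insert_sdiff_singleton (hJ : M.Indep J)
    (hIx : M.Indep (insert x I)) (hJx : ¬ M.Indep (insert x J)) :
    ∃ y ∈ J \ I, M.Indep (insert x J \ {y}) := by
  have hxJ : x ∉ J := fun h => hJx (by rwa [Set.insert_eq_of_mem h])
  have hxE : x ∈ M.E := hIx.subset_ground (Set.mem_insert x I)
  have hxcl : x ∈ M.closure J := by
    by_contra h
    exact hJx ((hJ.insert_indep_iff_of_notMem hxJ).2 ⟨hxE, h⟩)
  obtain ⟨y, hyC, hyIx⟩ : ∃ y ∈ M.fundCircuit x J, y ∉ insert x I :=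
    Set.not_subset.1 fun hsub => (hJ.fundCircuit_isCircuit hxcl hxJ).not_indep (hIx.subset hsub)
  have hyJ : y ∈ J :=
    (Set.mem_insert_iff.1 (M.fundCircuit_subset_insert x J hyC)).resolve_left
      fun h => hyIx (h ▸ Set.mem_insert x I)
  exact ⟨y, ⟨hyJ, fun h => hyIx (Set.mem_insert_of_mem x h)⟩,
    (hJ.mem_fundCircuit_iff hxcl hxJ).1 hyC⟩

theorem exists_finset_subset_sdiff_card_le_one_indep [DecidableEq V] {A B : Finset V}
    (hB : M.Indep ↑B) (hAx : M.Indep ↑(insert x A)) :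
    ∃ Z ⊆ B \ A, Z.card ≤ 1 ∧ M.Indep ↑(insert x B \ Z) := by
  by_cases hBx : M.Indep ↑(insert x B)
  · exact ⟨∅, empty_subset _, by simp, by simpa using hBx⟩
  · push_cast at hAx hBx
    obtain ⟨y, hy, hyind⟩ := hB.exists_mem_sdiff_indep_insert_sdiff_singleton hAx hBx
    exact ⟨{y}, by simpa using hy, by simp, by simpa using hyind⟩

end Matroid

theorem Finset.exists_hittingSet_card_le {ι α : Type*} [DecidableEq α] (T : Finset ι)
    (f : ι → Finset α) (hf : ∀ i ∈ T, (f i).Nonempty) :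
    ∃ Z ⊆ T.biUnion f, Z.card ≤ T.card ∧ ∀ i ∈ T, ∃ y ∈ Z, y ∈ f i := by
  choose y hy using hf
  refine ⟨T.attach.image fun i => y i.1 i.2, ?_, card_image_le.trans_eq card_attach, ?_⟩
  · intro z hz
    obtain ⟨i, -, rfl⟩ := mem_image.1 hz
    exact mem_biUnion.2 ⟨i.1, i.2, hy i.1 i.2⟩
  · exact fun i hi => ⟨y i hi, mem_image.2 ⟨⟨i, hi⟩, mem_attach _ _, rfl⟩, hy i hi⟩

section Bounds

variable [DecidableEq V] {H : Finset (Finset V)} {g : Finset V → ℕ} {A B S T Z e : Finset V}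
  {x y : V}

def RespectsBounds (H : Finset (Finset V)) (g : Finset V → ℕ) (S : Finset V) : Prop :=
  ∀ e ∈ H, (S ∩ e).card ≤ g e

theorem dbmisFeasible_iff {M : Matroid V} :
    DBMISFeasible M H g S ↔ M.Indep ↑S ∧ RespectsBounds H g S := by
  -- the two sides differ only in the `DecidableEq` instance used by `∩`
  unfold DBMISFeasible RespectsBounds
  congr!

theorem RespectsBounds.subset (hS : RespectsBounds H g S) (hTS : T ⊆ S) :
    RespectsBounds H g T :=
  fun e he => (card_le_card (inter_subset_inter hTS subset_rfl)).trans (hS e he)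

theorem card_insert_sdiff_inter_le (x : V) (B Z e : Finset V) :
    ((insert x B \ Z) ∩ e).card ≤ (B ∩ e).card + 1 := by
  refine (card_le_card ?_).trans (card_insert_le x (B ∩ e))
  intro z
  simp only [mem_inter, mem_sdiff, mem_insert]
  tauto

theorem card_insert_sdiff_inter_le_of_notMem (hxe : x ∉ e) (B Z : Finset V) :
    ((insert x B \ Z) ∩ e).card ≤ (B ∩ e).card := by
  refine card_le_card fun z => ?_
  simp only [mem_inter, mem_sdiff, mem_insert]
  rintro ⟨⟨rfl | hzB, -⟩, hze⟩
  exacts [absurd hze hxe, ⟨hzB, hze⟩]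

theorem card_insert_sdiff_inter_le_of_mem (hy : y ∈ B ∩ e) (hyZ : y ∈ Z) :
    ((insert x B \ Z) ∩ e).card ≤ (B ∩ e).card := by
  have hsub : (insert x B \ Z) ∩ e ⊆ (insert x (B ∩ e)).erase y := by
    intro z
    simp only [mem_inter, mem_sdiff, mem_insert, mem_erase]
    rintro ⟨⟨hz, hzZ⟩, hze⟩
    exact ⟨fun h => hzZ (h ▸ hyZ), by tauto⟩
  calc ((insert x B \ Z) ∩ e).card ≤ ((insert x (B ∩ e)).erase y).card := card_le_card hsub
    _ = (insert x (B ∩ e)).card - 1 := card_erase_of_mem (mem_insert_of_mem hy)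
    _ ≤ (B ∩ e).card := by have := card_insert_le x (B ∩ e); omega

theorem inter_sdiff_nonempty_of_tight (hxA : x ∉ A) (hxe : x ∈ e)
    (hAx : (insert x A ∩ e).card ≤ g e) (htight : g e ≤ (B ∩ e).card) :
    ((B ∩ e) \ A).Nonempty := by
  rw [sdiff_nonempty]
  intro hBA
  have hBAe : B ∩ e ⊆ A ∩ e := subset_inter hBA inter_subset_right
  rw [insert_inter_of_mem hxe, card_insert_of_notMem (fun h => hxA (mem_inter.1 h).1)] at hAx
  have := card_le_card hBAe
  omega

theorem RespectsBounds.exists_insert_sdiff (hxA : x ∉ A) (hB : RespectsBounds H g B)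
    (hAx : RespectsBounds H g (insert x A)) :
    ∃ Z ⊆ B \ A, Z.card ≤ (H.filter (x ∈ ·)).card ∧
      RespectsBounds H g (insert x B \ Z) := by
  set T := H.filter fun e => x ∈ e ∧ g e ≤ (B ∩ e).card
  obtain ⟨Z, hZT, hZcard, hhit⟩ := T.exists_hittingSet_card_le (fun e => (B ∩ e) \ A)
    fun e he => by
      obtain ⟨heH, hxe, htight⟩ := mem_filter.1 he
      exact inter_sdiff_nonempty_of_tight hxA hxe (hAx e heH) htight
  refine ⟨Z, hZT.trans (biUnion_subset.2 fun e _ => sdiff_subset_sdiff inter_subset_left le_rfl),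
    hZcard.trans (card_le_card (monotone_filter_right H fun _ _ h => h.1)), fun e he => ?_⟩
  by_cases hxe : x ∈ e
  · by_cases htight : g e ≤ (B ∩ e).card
    · obtain ⟨y, hyZ, hy⟩ := hhit e (mem_filter.2 ⟨he, hxe, htight⟩)
      exact (card_insert_sdiff_inter_le_of_mem (mem_sdiff.1 hy).1 hyZ).trans (hB e he)
    · have := card_insert_sdiff_inter_le x B Z e
      omega
  · exact (card_insert_sdiff_inter_le_of_notMem hxe B Z).trans (hB e he)

end Bounds

end

theorem dbmis_extendible_general {V : Type*} [DecidableEq V] (M : Matroid V)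
    (H : Finset (Finset V)) (g : Finset V → ℕ) (Δ : ℕ)
    (hdeg : ∀ x : V, (H.filter (fun e => x ∈ e)).card ≤ Δ)
    (A B : Finset V) (x : V)
    (hAB : A ⊆ B) (hB : DBMISFeasible M H g B)
    (hx : x ∉ B) (hAx : DBMISFeasible M H g (insert x A)) :
    ∃ Z ⊆ B \ A, Z.card ≤ Δ + 1 ∧ DBMISFeasible M H g ((insert x B) \ Z) := by
  rw [dbmisFeasible_iff] at hB hAx
  obtain ⟨Zm, hZm, hZmcard, hZmind⟩ := M.exists_finset_subset_sdiff_card_le_one_indep hB.1 hAx.1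
  obtain ⟨Zh, hZh, hZhcard, hZhbd⟩ :=
    hB.2.exists_insert_sdiff (fun h => hx (hAB h)) hAx.2
  refine ⟨Zm ∪ Zh, Finset.union_subset hZm hZh, ?_, dbmisFeasible_iff.2 ⟨?_, ?_⟩⟩
  · calc (Zm ∪ Zh).card ≤ Zm.card + Zh.card := Finset.card_union_le Zm Zh
      _ ≤ 1 + Δ := add_le_add hZmcard (hZhcard.trans (hdeg x))
      _ = Δ + 1 := add_comm 1 Δ
  · exact hZmind.subset <| by
      exact_mod_cast Finset.sdiff_subset_sdiff le_rfl Finset.subset_union_left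
  · exact hZhbd.subset (Finset.sdiff_subset_sdiff le_rfl Finset.subset_union_right)

/-- The feasible sets of the Degree Bounded Matroid Independent Set problem form a
`(Δ+1)`-extendible independence system: if `A ⊆ B` are feasible, `x ∉ B` and `A + x`
is feasible, then there is `Z ⊆ B \ A` with `|Z| ≤ Δ + 1` such that `(B + x) \ Z`
is feasible. -/
theorem dbmis_extendible {V : Type*} [DecidableEq V] (M : Matroid V)
    (H : Finset (Finset V)) (g : Finset V → ℕ) (Δ : ℕ)
    (hdeg : ∀ x : V, (H.filter (fun e => x ∈ e)).card ≤ Δ)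
    (A B : Finset V) (x : V)
    (hAB : A ⊆ B) (hA : DBMISFeasible M H g A) (hB : DBMISFeasible M H g B)
    (hx : x ∉ B) (hAx : DBMISFeasible M H g (insert x A)) :
    ∃ Z ⊆ B \ A, Z.card ≤ Δ + 1 ∧ DBMISFeasible M H g ((insert x B) \ Z) :=
  dbmis_extendible_general M H g Δ hdeg A B x hAB hB hx hAx
end

section
/- A graph with maximum degree at most Δ that is bipartite admits a proper edge coloring with Δ colors; equivalently, its edge set can be partitioned into Δ matchings (Kőnig's edge coloring theorem). -/
open scoped Classical

open Finset


lemma filter_subtype_card {ε : Type*} [Fintype ε] (P Q : ε → Prop)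
    [DecidablePred P] [DecidablePred Q] :
    (Finset.univ.filter fun g : {g // P g} => Q g.1).card
      = (Finset.univ.filter fun g : ε => P g ∧ Q g).card := by
  apply Finset.card_bij (fun g _ => g.1)
  · intro g hg; simp only [mem_filter, mem_univ, true_and] at hg ⊢; exact ⟨g.2, hg⟩
  · intro g hg g' hg' h; exact Subtype.ext h
  · intro g hg; simp only [mem_filter, mem_univ, true_and] at hg
    exact ⟨⟨g, hg.1⟩, by simp [hg.2], rfl⟩

theorem regularKonig (Δ : ℕ) : ∀ {A : Type u} {B : Type v} {ε : Type w} [Fintype ε]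
    (a : ε → A) (b : ε → B),
    (∀ x : A, (Finset.univ.filter (fun e : ε => a e = x)).card = Δ) →
    (∀ y : B, (Finset.univ.filter (fun e : ε => b e = y)).card = Δ) →
    ∃ col : ε → Fin Δ, ∀ e f : ε, e ≠ f → col e = col f → a e ≠ a f ∧ b e ≠ b f := by
  induction Δ with
  | zero =>
    intro A B ε _ a b hA hB
    haveI : IsEmpty ε := by
      constructor
      intro e
      have h := hA (a e)
      have : e ∈ Finset.univ.filter (fun e' : ε => a e' = a e) := by simp
      have := Finset.card_pos.mpr ⟨e, this⟩
      omega
    exact ⟨fun e => isEmptyElim e, fun e => isEmptyElim e⟩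
  | succ Δ ih =>
    intro A B ε _ a b hA hB
    classical
    -- surjectivity of endpoint maps
    have surjA : Function.Surjective a := by
      intro x
      have : (Finset.univ.filter (fun e : ε => a e = x)).Nonempty := by
        rw [← Finset.card_pos, hA x]; omega
      obtain ⟨e, he⟩ := this
      exact ⟨e, (Finset.mem_filter.mp he).2⟩
    have surjB : Function.Surjective b := by
      intro y
      have : (Finset.univ.filter (fun e : ε => b e = y)).Nonempty := by
        rw [← Finset.card_pos, hB y]; omega
      obtain ⟨e, he⟩ := this
      exact ⟨e, (Finset.mem_filter.mp he).2⟩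
    haveI : Fintype A := Fintype.ofSurjective a surjA
    haveI : Fintype B := Fintype.ofSurjective b surjB
    -- Hall's condition
    set t : A → Finset B := fun x => (Finset.univ.filter (fun e : ε => a e = x)).image b with ht
    have hall : ∀ s : Finset A, s.card ≤ (s.biUnion t).card := by
      intro s
      set T := s.biUnion t with hT
      have key1 : (Finset.univ.filter fun e : ε => a e ∈ s)
          = s.biUnion (fun x => Finset.univ.filter fun e : ε => a e = x) := by
        ext e; simp
      have c1 : (Finset.univ.filter fun e : ε => a e ∈ s).card = s.card * (Δ + 1) := by
        rw [key1, Finset.card_biUnion]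
        · rw [Finset.sum_congr rfl (fun x _ => hA x), Finset.sum_const, smul_eq_mul]
        · intro x hx x' hx' hxx'
          simp only [Finset.disjoint_left, Finset.mem_filter]
          rintro e ⟨-, rfl⟩ ⟨-, h⟩
          exact hxx' h
      have key2 : (Finset.univ.filter fun e : ε => a e ∈ s)
          ⊆ T.biUnion (fun y => Finset.univ.filter fun e : ε => b e = y) := by
        intro e he
        rw [Finset.mem_filter] at he
        refine Finset.mem_biUnion.mpr ⟨b e, ?_, by simp⟩
        exact Finset.mem_biUnion.mpr ⟨a e, he.2, Finset.mem_image.mpr ⟨e, by simp, rfl⟩⟩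
      have c2 : (Finset.univ.filter fun e : ε => a e ∈ s).card ≤ T.card * (Δ + 1) := by
        calc (Finset.univ.filter fun e : ε => a e ∈ s).card
            ≤ (T.biUnion (fun y => Finset.univ.filter fun e : ε => b e = y)).card :=
              Finset.card_le_card key2
          _ ≤ ∑ y ∈ T, (Finset.univ.filter fun e : ε => b e = y).card :=
              Finset.card_biUnion_le
          _ = T.card * (Δ + 1) := by
              rw [Finset.sum_congr rfl (fun y _ => hB y), Finset.sum_const, smul_eq_mul]
      have := c1 ▸ c2
      exact Nat.le_of_mul_le_mul_right this (by omega)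
    obtain ⟨f, finj, hf⟩ := (Finset.all_card_le_biUnion_card_iff_exists_injective t).mp hall
    -- choose matching edges
    have hEx : ∀ x : A, ∃ e : ε, a e = x ∧ b e = f x := by
      intro x
      have := hf x
      simp only [ht, Finset.mem_image, Finset.mem_filter, Finset.mem_univ, true_and] at this
      obtain ⟨e, he1, he2⟩ := this
      exact ⟨e, he1, he2⟩
    choose E hEa hEb using hEx
    have Einj : Function.Injective E := by
      intro x x' h
      rw [← hEa x, ← hEa x', h]
    -- f is surjective
    have cardA : Fintype.card ε = Fintype.card A * (Δ + 1) := by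
      have : (Finset.univ : Finset ε)
          = Finset.univ.biUnion (fun x : A => Finset.univ.filter fun e : ε => a e = x) := by
        ext e; simp
      rw [← Finset.card_univ, this, Finset.card_biUnion]
      · rw [Finset.sum_congr rfl (fun x _ => hA x), Finset.sum_const, smul_eq_mul,
          Finset.card_univ]
      · intro x hx x' hx' hxx'
        simp only [Finset.disjoint_left, Finset.mem_filter]
        rintro e ⟨-, rfl⟩ ⟨-, h⟩
        exact hxx' h
    have cardB : Fintype.card ε = Fintype.card B * (Δ + 1) := by
      have : (Finset.univ : Finset ε)
          = Finset.univ.biUnion (fun y : B => Finset.univ.filter fun e : ε => b e = y) := by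
        ext e; simp
      rw [← Finset.card_univ, this, Finset.card_biUnion]
      · rw [Finset.sum_congr rfl (fun y _ => hB y), Finset.sum_const, smul_eq_mul,
          Finset.card_univ]
      · intro y hy y' hy' hyy'
        simp only [Finset.disjoint_left, Finset.mem_filter]
        rintro e ⟨-, rfl⟩ ⟨-, h⟩
        exact hyy' h
    have cardAB : Fintype.card A = Fintype.card B := by
      have := cardA ▸ cardB
      exact Nat.eq_of_mul_eq_mul_right (by omega) this
    have fsurj : Function.Surjective f :=
      ((Fintype.bijective_iff_injective_and_card f).mpr ⟨finj, cardAB⟩).2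
    -- the matching
    set M : Finset ε := Finset.univ.image E with hM
    -- degree computations in the reduced graph
    have degA₂ : ∀ x : A,
        (Finset.univ.filter fun g : {g : ε // g ∉ M} => a g.1 = x).card = Δ := by
      intro x
      rw [filter_subtype_card (fun g => g ∉ M) (fun g => a g = x)]
      have hsplit := Finset.card_filter_add_card_filter_not
        (s := Finset.univ.filter fun e : ε => a e = x) (p := fun g => g ∈ M)
      rw [Finset.filter_filter, Finset.filter_filter, hA x] at hsplit
      have hone : (Finset.univ.filter fun g : ε => a g = x ∧ g ∈ M) = {E x} := by
        ext g
        simp only [Finset.mem_filter, Finset.mem_univ, true_and, Finset.mem_singleton,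
          hM, Finset.mem_image]
        constructor
        · rintro ⟨hag, x', rfl⟩
          rw [hEa x'] at hag; rw [hag]
        · rintro rfl
          exact ⟨hEa x, x, rfl⟩
      rw [hone, Finset.card_singleton] at hsplit
      have : (Finset.univ.filter fun g : ε => g ∉ M ∧ a g = x)
          = (Finset.univ.filter fun g : ε => a g = x ∧ g ∉ M) := by
        apply Finset.filter_congr; intro g _; exact and_comm
      rw [this]
      omega
    have degB₂ : ∀ y : B,
        (Finset.univ.filter fun g : {g : ε // g ∉ M} => b g.1 = y).card = Δ := by
      intro y
      obtain ⟨x, rfl⟩ := fsurj y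
      rw [filter_subtype_card (fun g => g ∉ M) (fun g => b g = f x)]
      have hsplit := Finset.card_filter_add_card_filter_not
        (s := Finset.univ.filter fun e : ε => b e = f x) (p := fun g => g ∈ M)
      rw [Finset.filter_filter, Finset.filter_filter, hB (f x)] at hsplit
      have hone : (Finset.univ.filter fun g : ε => b g = f x ∧ g ∈ M) = {E x} := by
        ext g
        simp only [Finset.mem_filter, Finset.mem_univ, true_and, Finset.mem_singleton,
          hM, Finset.mem_image]
        constructor
        · rintro ⟨hbg, x', rfl⟩
          rw [hEb x'] at hbg
          rw [finj hbg]
        · rintro rfl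
          exact ⟨hEb x, x, rfl⟩
      rw [hone, Finset.card_singleton] at hsplit
      have : (Finset.univ.filter fun g : ε => g ∉ M ∧ b g = f x)
          = (Finset.univ.filter fun g : ε => b g = f x ∧ g ∉ M) := by
        apply Finset.filter_congr; intro g _; exact and_comm
      rw [this]
      omega
    obtain ⟨col₂, hcol₂⟩ := ih (fun g : {g : ε // g ∉ M} => a g.1) (fun g => b g.1) degA₂ degB₂
    refine ⟨fun g => if h : g ∈ M then Fin.last Δ else (col₂ ⟨g, h⟩).castSucc, ?_⟩
    intro g g' hne hcol
    by_cases hg : g ∈ M <;> by_cases hg' : g' ∈ M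
    · obtain ⟨x, -, rfl⟩ := Finset.mem_image.mp hg
      obtain ⟨x', -, rfl⟩ := Finset.mem_image.mp hg'
      have hxx' : x ≠ x' := fun h => hne (by rw [h])
      constructor
      · rw [hEa x, hEa x']; exact hxx'
      · rw [hEb x, hEb x']; exact fun h => hxx' (finj h)
    · simp only [dif_pos hg, dif_neg hg'] at hcol
      exact absurd hcol (Fin.castSucc_lt_last _).ne'
    · simp only [dif_neg hg, dif_pos hg'] at hcol
      exact absurd hcol (Fin.castSucc_lt_last _).ne
    · simp only [dif_neg hg, dif_neg hg'] at hcol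
      have := hcol₂ ⟨g, hg⟩ ⟨g', hg'⟩ (fun h => hne (congrArg Subtype.val h))
        (Fin.castSucc_inj.mp hcol)
      exact this



/-- Kőnig's edge coloring theorem: a bipartite multigraph with maximum degree at most `Δ`
admits a proper edge coloring with `Δ` colors; equivalently, its edge set can be
partitioned into `Δ` matchings. Here the bipartite multigraph is given by its edge
type `ε` together with the endpoint maps `a : ε → A` and `b : ε → B` into the two
vertex classes. -/
theorem konig_edge_coloring {A B ε : Type*} [Fintype ε]
    (a : ε → A) (b : ε → B) (Δ : ℕ)
    (hA : ∀ x : A, (Finset.univ.filter (fun e : ε => a e = x)).card ≤ Δ)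
    (hB : ∀ y : B, (Finset.univ.filter (fun e : ε => b e = y)).card ≤ Δ) :
    ∃ col : ε → Fin Δ, ∀ e f : ε, e ≠ f → col e = col f → a e ≠ a f ∧ b e ≠ b f := by
  classical
  -- restrict vertex classes to the ranges, so they are finite
  haveI : Fintype (Set.range a) := Set.fintypeRange a
  haveI : Fintype (Set.range b) := Set.fintypeRange b
  set A₀ := Set.range a
  set B₀ := Set.range b
  set a₀ : ε → A₀ := fun e => ⟨a e, Set.mem_range_self e⟩ with ha₀
  set b₀ : ε → B₀ := fun e => ⟨b e, Set.mem_range_self e⟩ with hb₀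
  have hAeq : ∀ x : A₀, (Finset.univ.filter fun e : ε => a₀ e = x)
      = (Finset.univ.filter fun e : ε => a e = x.1) := by
    intro x; apply Finset.filter_congr; intro e _
    simp [ha₀, Subtype.ext_iff]
  have hBeq : ∀ y : B₀, (Finset.univ.filter fun e : ε => b₀ e = y)
      = (Finset.univ.filter fun e : ε => b e = y.1) := by
    intro y; apply Finset.filter_congr; intro e _
    simp [hb₀, Subtype.ext_iff]
  set dA : A₀ → ℕ := fun x => Δ - (Finset.univ.filter fun e : ε => a₀ e = x).card with hdA
  set dB : B₀ → ℕ := fun y => Δ - (Finset.univ.filter fun e : ε => b₀ e = y).card with hdB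
  -- the completed regular multigraph
  let ε' := (ε ⊕ ε) ⊕ ((Σ x : A₀, Fin (dA x)) ⊕ (Σ y : B₀, Fin (dB y)))
  let a' : ε' → A₀ ⊕ B₀ := fun z => match z with
    | .inl (.inl e) => .inl (a₀ e)
    | .inl (.inr e) => .inr (b₀ e)
    | .inr (.inl ⟨x, _⟩) => .inl x
    | .inr (.inr ⟨y, _⟩) => .inr y
  let b' : ε' → B₀ ⊕ A₀ := fun z => match z with
    | .inl (.inl e) => .inl (b₀ e)
    | .inl (.inr e) => .inr (a₀ e)
    | .inr (.inl ⟨x, _⟩) => .inr x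
    | .inr (.inr ⟨y, _⟩) => .inl y
  have hdegA' : ∀ v : A₀ ⊕ B₀, (Finset.univ.filter fun z : ε' => a' z = v).card = Δ := by
    intro v
    rw [Finset.card_filter, Fintype.sum_sum_type, Fintype.sum_sum_type, Fintype.sum_sum_type]
    cases v with
    | inl x =>
      simp only [a', Sum.inl.injEq, reduceCtorEq, if_false, Finset.sum_const_zero, add_zero,
        zero_add]
      have hterm2 : (∑ z : (Σ x' : ↥A₀, Fin (dA x')), if z.fst = x then 1 else 0) = dA x := by
        rw [← Finset.univ_sigma_univ, Finset.sum_sigma]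
        have : ∀ x' : ↥A₀, (∑ _i : Fin (dA x'), if x' = x then 1 else 0)
            = if x' = x then dA x' else 0 := by
          intro x'; split <;> simp
        rw [Finset.sum_congr rfl (fun x' _ => this x'), Finset.sum_ite_eq']
        simp
      rw [hterm2, ← Finset.card_filter]
      have h1 := hA x.1
      rw [← hAeq x] at h1
      simp only [hdA]
      omega
    | inr y =>
      simp only [a', Sum.inr.injEq, reduceCtorEq, if_false, Finset.sum_const_zero, add_zero,
        zero_add]
      have hterm2 : (∑ z : (Σ y' : ↥B₀, Fin (dB y')), if z.fst = y then 1 else 0) = dB y := by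
        rw [← Finset.univ_sigma_univ, Finset.sum_sigma]
        have : ∀ y' : ↥B₀, (∑ _i : Fin (dB y'), if y' = y then 1 else 0)
            = if y' = y then dB y' else 0 := by
          intro y'; split <;> simp
        rw [Finset.sum_congr rfl (fun y' _ => this y'), Finset.sum_ite_eq']
        simp
      rw [hterm2, ← Finset.card_filter]
      have h1 := hB y.1
      rw [← hBeq y] at h1
      simp only [hdB]
      omega
  have hdegB' : ∀ v : B₀ ⊕ A₀, (Finset.univ.filter fun z : ε' => b' z = v).card = Δ := by
    intro v
    rw [Finset.card_filter, Fintype.sum_sum_type, Fintype.sum_sum_type, Fintype.sum_sum_type]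
    cases v with
    | inl y =>
      simp only [b', Sum.inl.injEq, reduceCtorEq, if_false, Finset.sum_const_zero, add_zero,
        zero_add]
      have hterm2 : (∑ z : (Σ y' : ↥B₀, Fin (dB y')), if z.fst = y then 1 else 0) = dB y := by
        rw [← Finset.univ_sigma_univ, Finset.sum_sigma]
        have : ∀ y' : ↥B₀, (∑ _i : Fin (dB y'), if y' = y then 1 else 0)
            = if y' = y then dB y' else 0 := by
          intro y'; split <;> simp
        rw [Finset.sum_congr rfl (fun y' _ => this y'), Finset.sum_ite_eq']
        simp
      rw [hterm2, ← Finset.card_filter]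
      have h1 := hB y.1
      rw [← hBeq y] at h1
      simp only [hdB]
      omega
    | inr x =>
      simp only [b', Sum.inr.injEq, reduceCtorEq, if_false, Finset.sum_const_zero, add_zero,
        zero_add]
      have hterm2 : (∑ z : (Σ x' : ↥A₀, Fin (dA x')), if z.fst = x then 1 else 0) = dA x := by
        rw [← Finset.univ_sigma_univ, Finset.sum_sigma]
        have : ∀ x' : ↥A₀, (∑ _i : Fin (dA x'), if x' = x then 1 else 0)
            = if x' = x then dA x' else 0 := by
          intro x'; split <;> simp
        rw [Finset.sum_congr rfl (fun x' _ => this x'), Finset.sum_ite_eq']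
        simp
      rw [hterm2, ← Finset.card_filter]
      have h1 := hA x.1
      rw [← hAeq x] at h1
      simp only [hdA]
      omega
  obtain ⟨col', hcol'⟩ := regularKonig Δ a' b' (fun v => by rw [Finset.filter_congr_decidable]; exact hdegA' v)
    (fun v => by rw [Finset.filter_congr_decidable]; exact hdegB' v)
  refine ⟨fun e => col' (.inl (.inl e)), ?_⟩
  intro e f hne hc
  have hne' : (Sum.inl (Sum.inl e) : ε') ≠ Sum.inl (Sum.inl f) := by
    intro h
    exact hne (Sum.inl.inj (Sum.inl.inj h))
  obtain ⟨h1, h2⟩ := hcol' _ _ hne' hc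
  constructor
  · intro h
    exact h1 (congrArg Sum.inl (Subtype.ext h))
  · intro h
    exact h2 (congrArg Sum.inl (Subtype.ext h))
end

section
/- Given two feasible solutions S and S* of a DBMIS instance with unit bounds, the subsets of S ∪ S* that are feasible for the DBMIS instance are exactly the common independent sets of Δ+1 matroids on ground set S ∪ S*: the restriction of M to S ∪ S*, together with Δ partition matroids arising from a partition of the conflict-graph edges into Δ matchings, each part being a conflicting pair {v, u} with rank bound 1. -/
open scoped Classical

/-- `(v, u)` is a conflict pair for the feasible solutions `S, S*`: `v ∈ S`, `u ∈ S*`,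
`v ≠ u` and some hyperedge contains both. -/
def ConflictPair {V : Type*} (H : Finset (Finset V)) (S Sstar : Finset V)
    (p : V × V) : Prop :=
  p.1 ∈ S ∧ p.2 ∈ Sstar ∧ p.1 ≠ p.2 ∧ ∃ e ∈ H, p.1 ∈ e ∧ p.2 ∈ e

/-!
With bounds at most one, a hyperedge `e` with `g e = 0` meets neither `S` nor `S*`, hence no
subset of `S ∪ S*`; and two distinct elements of `X ⊆ S ∪ S*` in a hyperedge with `g e = 1` cannot
both lie in `S`, nor both in `S*`, so they form a conflict pair. Conversely a conflict pair inside
`X` puts two elements of `X` into one hyperedge. So the bounds on `X` amount to `X` containing no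
conflict pair, and the matchings `N i` cover every conflict pair.
-/

section

variable {V : Type*} {H : Finset (Finset V)} {g : Finset V → ℕ} {S T X e : Finset V}

theorem ConflictPair.not_both_mem {p : V × V} (hg : ∀ e ∈ H, g e ≤ 1)
    (hX : ∀ e ∈ H, (X ∩ e).card ≤ g e) (hp : ConflictPair H S T p) :
    ¬ (p.1 ∈ X ∧ p.2 ∈ X) := by
  rintro ⟨h1, h2⟩
  obtain ⟨-, -, hne, e, he, h1e, h2e⟩ := hp
  have : 1 < (X ∩ e).card :=
    Finset.one_lt_card.mpr ⟨p.1, Finset.mem_inter.mpr ⟨h1, h1e⟩, p.2,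
      Finset.mem_inter.mpr ⟨h2, h2e⟩, hne⟩
  have := (hX e he).trans (hg e he)
  omega

theorem card_inter_le_of_subset_union {k : ℕ} (hk : k ≤ 1) (hX : ∀ x ∈ X, x ∈ S ∨ x ∈ T)
    (hS : (S ∩ e).card ≤ k) (hT : (T ∩ e).card ≤ k)
    (hconf : ∀ a ∈ X ∩ e, ∀ b ∈ X ∩ e, a ∈ S → b ∈ T → a = b) :
    (X ∩ e).card ≤ k := by
  have hsub : X ∩ e ⊆ S ∩ e ∪ T ∩ e := fun x hx => by
    obtain ⟨hxX, hxe⟩ := Finset.mem_inter.mp hx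
    rcases hX x hxX with hxS | hxT
    · exact Finset.mem_union_left _ (Finset.mem_inter.mpr ⟨hxS, hxe⟩)
    · exact Finset.mem_union_right _ (Finset.mem_inter.mpr ⟨hxT, hxe⟩)
  rcases Nat.le_one_iff_eq_zero_or_eq_one.mp hk with rfl | rfl
  · have := (Finset.card_le_card hsub).trans (Finset.card_union_le _ _)
    omega
  · rw [Finset.card_le_one] at hS hT ⊢
    intro a ha b hb
    obtain ⟨haX, hae⟩ := Finset.mem_inter.mp ha
    obtain ⟨hbX, hbe⟩ := Finset.mem_inter.mp hb
    rcases hX a haX with haS | haT <;> rcases hX b hbX with hbS | hbT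
    · exact hS a (Finset.mem_inter.mpr ⟨haS, hae⟩) b (Finset.mem_inter.mpr ⟨hbS, hbe⟩)
    · exact hconf a ha b hb haS hbT
    · exact (hconf b hb a ha hbS haT).symm
    · exact hT a (Finset.mem_inter.mpr ⟨haT, hae⟩) b (Finset.mem_inter.mpr ⟨hbT, hbe⟩)

theorem card_inter_le_of_conflictFree (hg : ∀ e ∈ H, g e ≤ 1) (hX : ∀ x ∈ X, x ∈ S ∨ x ∈ T)
    (hS : ∀ e ∈ H, (S ∩ e).card ≤ g e) (hT : ∀ e ∈ H, (T ∩ e).card ≤ g e)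
    (hfree : ∀ p, ConflictPair H S T p → ¬ (p.1 ∈ X ∧ p.2 ∈ X)) :
    ∀ e ∈ H, (X ∩ e).card ≤ g e := fun e he =>
  card_inter_le_of_subset_union (hg e he) hX (hS e he) (hT e he) fun a ha b hb haS hbT => by
    obtain ⟨haX, hae⟩ := Finset.mem_inter.mp ha
    obtain ⟨hbX, hbe⟩ := Finset.mem_inter.mp hb
    by_contra hab
    exact hfree (a, b) ⟨haS, hbT, hab, e, he, hae, hbe⟩ ⟨haX, hbX⟩

end

theorem dbmis_unit_bounds_matroid_intersection_general {V : Type*} [DecidableEq V]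
    (M : Matroid V) (H : Finset (Finset V)) (g : Finset V → ℕ) (Δ : ℕ)
    (hg : ∀ e ∈ H, g e ≤ 1)
    (S Sstar : Finset V)
    (hS : DBMISFeasible M H g S) (hSstar : DBMISFeasible M H g Sstar)
    (N : Fin Δ → Finset (V × V))
    (hNconf : ∀ i, ∀ p ∈ N i, ConflictPair H S Sstar p)
    (hNcover : ∀ p : V × V, ConflictPair H S Sstar p → ∃ i, p ∈ N i) :
    ∀ X ⊆ S ∪ Sstar,
      (DBMISFeasible M H g X ↔
        (M.Indep ↑X ∧ ∀ i : Fin Δ, ∀ p ∈ N i, ¬ (p.1 ∈ X ∧ p.2 ∈ X))) := by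
  intro X hX
  constructor
  · rintro ⟨hind, hbounds⟩
    exact ⟨hind, fun i p hp => (hNconf i p hp).not_both_mem hg hbounds⟩
  · rintro ⟨hind, hfree⟩
    refine ⟨hind, card_inter_le_of_conflictFree hg (fun x hx => Finset.mem_union.mp (hX hx))
      hS.2 hSstar.2 fun p hp => ?_⟩
    obtain ⟨i, hi⟩ := hNcover p hp
    exact hfree i p hi

/-- For DBMIS with unit upper bounds and two feasible solutions `S, S*`, given a
partition of the conflict-graph edges into `Δ` matchings `N 0, …, N (Δ-1)`, the
feasible subsets of `S ∪ S*` are exactly the common independent sets of the `Δ+1`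
matroids: the restriction of `M` to `S ∪ S*`, together with, for each `i`, the
partition matroid whose rank-1 parts are the pairs of the matching `N i`. -/
theorem dbmis_unit_bounds_matroid_intersection {V : Type*} [DecidableEq V]
    (M : Matroid V) (H : Finset (Finset V)) (g : Finset V → ℕ) (Δ : ℕ)
    (hdeg : ∀ x : V, (H.filter (fun e => x ∈ e)).card ≤ Δ)
    (hg : ∀ e ∈ H, g e ≤ 1)
    (S Sstar : Finset V)
    (hS : DBMISFeasible M H g S) (hSstar : DBMISFeasible M H g Sstar)
    (N : Fin Δ → Finset (V × V))
    (hNconf : ∀ i, ∀ p ∈ N i, ConflictPair H S Sstar p)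
    (hNcover : ∀ p : V × V, ConflictPair H S Sstar p → ∃ i, p ∈ N i)
    (hNdisj : ∀ i j, i ≠ j → Disjoint (N i) (N j))
    (hNmatching : ∀ i, ∀ p ∈ N i, ∀ q ∈ N i, p ≠ q → p.1 ≠ q.1 ∧ p.2 ≠ q.2) :
    ∀ X ⊆ S ∪ Sstar,
      (DBMISFeasible M H g X ↔
        (M.Indep ↑X ∧ ∀ i : Fin Δ, ∀ p ∈ N i, ¬ (p.1 ∈ X ∧ p.2 ∈ X))) :=
  dbmis_unit_bounds_matroid_intersection_general M H g Δ hg S Sstar hS hSstar N hNconf hNcover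
end

section
/- Local optimality bound for the bundles local search (Case 1): let F be a properly colored forest with bundles in an edge-colored multigraph such that for every edge e ∉ F, F + e is not a properly colored forest with bundles. Fix u, v with no u–v path of length ≥ 2 in supp(F), and let E•_uv be a set of non-F edges between u and v with pairwise distinct colors. Then for every S ⊆ F such that (F \ S) ∪ E•_uv is a properly colored forest with bundles, |S| ≥ |E•_uv|. -/
open scoped Classical

/-- `e` is incident to vertex `v`. -/
def Inc {V ε : Type*} (ends : ε → V × V) (e : ε) (v : V) : Prop :=
  (ends e).1 = v ∨ (ends e).2 = v

/-- `e` joins the vertices `u` and `v`. -/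
def Joins {V ε : Type*} (ends : ε → V × V) (e : ε) (u v : V) : Prop :=
  ends e = (u, v) ∨ ends e = (v, u)

/-- A cycle of length `n` in the edge set `F` of a multigraph. -/
def IsCycleIn {V ε : Type*} (ends : ε → V × V) (F : Finset ε) (n : ℕ) : Prop :=
  ∃ (vs : ZMod n → V) (es : ZMod n → ε), Function.Injective vs ∧ Function.Injective es ∧
    ∀ i : ZMod n, es i ∈ F ∧ Joins ends (es i) (vs i) (vs (i + 1))

/-- `F` is a forest with bundles: no cycle on at least three vertices. -/
def IsForestWithBundles {V ε : Type*} (ends : ε → V × V) (F : Finset ε) : Prop :=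
  ¬ ∃ n : ℕ, 3 ≤ n ∧ IsCycleIn ends F n

/-- `F` is properly colored: two distinct edges of `F` sharing an endpoint have
distinct colors. -/
def ProperlyColored {V ε C : Type*} (ends : ε → V × V) (c : ε → C) (F : Finset ε) : Prop :=
  ∀ e ∈ F, ∀ f ∈ F, e ≠ f → (∃ v, Inc ends e v ∧ Inc ends f v) → c e ≠ c f

/-- `F` is a properly colored forest with bundles. -/
def PCFB {V ε C : Type*} (ends : ε → V × V) (c : ε → C) (F : Finset ε) : Prop :=
  IsForestWithBundles ends F ∧ ProperlyColored ends c F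

/-- There is a `u`–`v` path of length `n` in the support graph of `F`. -/
def SuppPath {V ε : Type*} (ends : ε → V × V) (F : Finset ε) (u v : V) (n : ℕ) : Prop :=
  ∃ vs : Fin (n + 1) → V, Function.Injective vs ∧ vs 0 = u ∧ vs (Fin.last n) = v ∧
    ∀ i : Fin n, ∃ e ∈ F, Joins ends e (vs i.castSucc) (vs i.succ)

lemma joins_symm' {V ε : Type*} {ends : ε → V × V} {e : ε} {a b : V}
    (h : Joins ends e a b) : Joins ends e b a := h.symm

lemma suppPath_symm' {V ε : Type*} {ends : ε → V × V} {F : Finset ε} {u v : V} {n : ℕ}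
    (h : SuppPath ends F u v n) : SuppPath ends F v u n := by
  obtain ⟨vs, hinj, h0, hl, he⟩ := h
  refine ⟨fun j => vs j.rev, hinj.comp Fin.rev_injective, ?_, ?_, ?_⟩
  · simpa [Fin.rev_zero] using hl
  · simpa [Fin.rev_last] using h0
  · intro i
    obtain ⟨e, heF, hj⟩ := he i.rev
    refine ⟨e, heF, ?_⟩
    simp only [Fin.rev_castSucc, Fin.rev_succ]
    exact joins_symm' hj

lemma no_cycle_insert {V ε : Type*} [DecidableEq ε] {ends : ε → V × V}
    {F : Finset ε} {e : ε} {u v : V}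
    (hF : IsForestWithBundles ends F)
    (hnopath : ¬ ∃ n : ℕ, 2 ≤ n ∧ SuppPath ends F u v n)
    (heJ : Joins ends e u v) :
    IsForestWithBundles ends (insert e F) := by
  rintro ⟨n, hn3, vs, es, hvs, hes, hcyc⟩
  by_cases hex : ∃ i, es i = e
  · obtain ⟨i0, hi0⟩ := hex
    obtain ⟨m, rfl⟩ : ∃ m, n = m + 1 := ⟨n - 1, by omega⟩
    have hm : 2 ≤ m := by omega
    have hcastinj : ∀ a b : ℕ, a < m + 1 → b < m + 1 →
        ((a : ZMod (m+1)) = (b : ZMod (m+1))) → a = b := by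
      intro a b ha hb h
      have h2 := congrArg ZMod.val h
      rwa [ZMod.val_cast_of_lt ha, ZMod.val_cast_of_lt hb] at h2
    have hone : (1 : ZMod (m+1)) + (m : ZMod (m+1)) = 0 := by
      have h := ZMod.natCast_self (m+1)
      push_cast at h
      linear_combination h
    set w : Fin (m+1) → V := fun j => vs (i0 + 1 + (j.val : ZMod (m+1))) with hw
    have hwinj : Function.Injective w := by
      intro j k hjk
      have h1 := hvs hjk
      have h2 : ((j.val : ZMod (m+1))) = (k.val : ZMod (m+1)) := add_left_cancel h1
      exact Fin.ext (hcastinj _ _ j.isLt k.isLt h2)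
    have hpath : SuppPath ends F (vs (i0 + 1)) (vs i0) m := by
      refine ⟨w, hwinj, ?_, ?_, ?_⟩
      · simp [hw]
      · show vs (i0 + 1 + ((Fin.last m).val : ZMod (m+1))) = vs i0
        rw [Fin.val_last]
        congr 1
        rw [add_assoc, hone, add_zero]
      · intro j
        set idx : ZMod (m+1) := i0 + 1 + (j.val : ZMod (m+1)) with hidx
        refine ⟨es idx, ?_, ?_⟩
        · rcases Finset.mem_insert.1 (hcyc idx).1 with h | h
          · exfalso
            have : idx = i0 := hes (h.trans hi0.symm)
            have h3 : ((1 + j.val : ℕ) : ZMod (m+1)) = ((0 : ℕ) : ZMod (m+1)) := by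
              push_cast
              have := this
              rw [hidx, add_assoc] at this
              nth_rewrite 2 [show (i0 : ZMod (m+1)) = i0 + 0 from (add_zero i0).symm] at this
              exact add_left_cancel this
            have := hcastinj _ _ (by omega) (by omega) h3
            omega
          · exact h
        · have hj := (hcyc idx).2
          have h1 : w j.castSucc = vs idx := by
            simp [hw, hidx]
          have h2 : w j.succ = vs (idx + 1) := by
            show vs (i0 + 1 + ((j.val + 1 : ℕ) : ZMod (m+1))) = vs (idx + 1)
            congr 1
            rw [hidx]
            push_cast
            ring
          rw [h1, h2]
          exact hj
    have hj0 : Joins ends e (vs i0) (vs (i0 + 1)) := hi0 ▸ (hcyc i0).2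
    have hfin : SuppPath ends F u v m := by
      rcases hj0 with h1 | h1 <;> rcases heJ with h2 | h2 <;>
        · have h3 := h1.symm.trans h2
          rw [Prod.mk.injEq] at h3
          first
            | exact suppPath_symm' (h3.2 ▸ h3.1 ▸ hpath)
            | exact h3.2 ▸ h3.1 ▸ hpath
    exact hnopath ⟨m, hm, hfin⟩
  · push_neg at hex
    exact hF ⟨n, hn3, vs, es, hvs, hes, fun i =>
      ⟨(Finset.mem_insert.1 (hcyc i).1).resolve_left (hex i), (hcyc i).2⟩⟩

/-- Case 1 of the local-optimality analysis of the bundles local search: let `F` be a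
properly colored forest with bundles such that `F + e` is infeasible for every `e ∉ F`.
If there is no `u`–`v` path of length at least two in `supp F`, and `E•` is a set of
non-`F` edges between `u` and `v` with pairwise distinct colors, then every `S ⊆ F`
for which `(F \ S) ∪ E•` is a properly colored forest with bundles satisfies
`|S| ≥ |E•|`. -/
theorem bundles_local_search_case1 {V ε C : Type*} [DecidableEq ε]
    (ends : ε → V × V) (hloopless : ∀ e : ε, (ends e).1 ≠ (ends e).2)
    (c : ε → C) (F : Finset ε) (hF : PCFB ends c F)
    (hmax : ∀ e ∉ F, ¬ PCFB ends c (insert e F))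
    (u v : V) (huv : u ≠ v)
    (hnopath : ¬ ∃ n : ℕ, 2 ≤ n ∧ SuppPath ends F u v n)
    (Ebullet : Finset ε)
    (hEb : ∀ e ∈ Ebullet, e ∉ F ∧ Joins ends e u v)
    (hEbcol : ∀ e ∈ Ebullet, ∀ f ∈ Ebullet, e ≠ f → c e ≠ c f) :
    ∀ S ⊆ F, PCFB ends c ((F \ S) ∪ Ebullet) → Ebullet.card ≤ S.card := by
  intro S hS hPCFB
  have key : ∀ e ∈ Ebullet, ∃ f ∈ S, c f = c e := by
    intro e he
    obtain ⟨heF, heJ⟩ := hEb e he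
    have hforest : IsForestWithBundles ends (insert e F) :=
      no_cycle_insert hF.1 hnopath heJ
    have hnpc : ¬ ProperlyColored ends c (insert e F) :=
      fun hpc => hmax e heF ⟨hforest, hpc⟩
    simp only [ProperlyColored] at hnpc
    push_neg at hnpc
    obtain ⟨a, ha, b, hb, hab, hshare, hcab⟩ := hnpc
    have hconf : ∃ f ∈ F, (∃ w, Inc ends f w ∧ Inc ends e w) ∧ c f = c e := by
      rcases Finset.mem_insert.1 ha with rfl | haF <;>
        rcases Finset.mem_insert.1 hb with rfl | hbF
      · exact absurd rfl hab
      · obtain ⟨w, hw1, hw2⟩ := hshare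
        exact ⟨b, hbF, ⟨w, hw2, hw1⟩, hcab.symm⟩
      · obtain ⟨w, hw1, hw2⟩ := hshare
        exact ⟨a, haF, ⟨w, hw1, hw2⟩, hcab⟩
      · exact absurd hcab (hF.2 a haF b hbF hab hshare)
    obtain ⟨f, hfF, hshare', hcfe⟩ := hconf
    refine ⟨f, ?_, hcfe⟩
    by_contra hfS
    have hfmem : f ∈ (F \ S) ∪ Ebullet :=
      Finset.mem_union_left _ (Finset.mem_sdiff.2 ⟨hfF, hfS⟩)
    have hemem : e ∈ (F \ S) ∪ Ebullet := Finset.mem_union_right _ he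
    exact hPCFB.2 f hfmem e hemem (fun h => heF (h ▸ hfF)) hshare' hcfe
  classical
  refine Finset.card_le_card_of_injOn
    (fun e => if h : ∃ f ∈ S, c f = c e then h.choose else e) ?_ ?_
  · intro e he
    simp only [dif_pos (key e he)]
    exact (key e he).choose_spec.1
  · intro e1 he1' e2 he2' hgeq
    have he1 := Finset.mem_coe.mp he1'
    have he2 := Finset.mem_coe.mp he2'
    by_contra hne
    have h1 : c ((key e1 he1).choose) = c e1 := (key e1 he1).choose_spec.2
    have h2 : c ((key e2 he2).choose) = c e2 := (key e2 he2).choose_spec.2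
    simp only [dif_pos (key e1 he1), dif_pos (key e2 he2)] at hgeq
    exact hEbcol e1 he1 e2 he2 hne (h1.symm.trans (hgeq ▸ h2))
end

section
/- Exchange property for forests in the same component: let F and O be two forests (edge sets of a graph) whose edges are contained in a common connected component with vertex set T of the forest F. Then there exists an injective map φ from the edges of O[T] to the edges of F[T] such that each edge xy of O[T] is mapped to an edge lying on the unique x–y path in F[T]. -/
open scoped Classical

/-- `F` is a forest: it contains no cycle (of any length). -/
def IsForest {V ε : Type*} (ends : ε → V × V) (F : Finset ε) : Prop :=
  ∀ n : ℕ, 1 ≤ n → ¬ IsCycleIn ends F n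

/-- `x` and `y` are connected by a walk using edges of `F`. -/
def ConnIn {V ε : Type*} (ends : ε → V × V) (F : Finset ε) (x y : V) : Prop :=
  ∃ n : ℕ, ∃ vs : Fin (n + 1) → V, vs 0 = x ∧ vs (Fin.last n) = y ∧
    ∀ i : Fin n, ∃ e ∈ F, Joins ends e (vs i.castSucc) (vs i.succ)

/-!
An edge `f` of a forest `F` separates `x` from `y` (deleting it disconnects them) exactly when it
lies on the `x`–`y` path. By Hall's theorem it suffices that every set `A` of edges of `O` is
separated by at least `|A|` edges of `F`. Those edges form a subforest `W` of `F` in which the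
ends of every edge of `A` are connected, and a forest `A` whose edges have their ends connected
in a forest `W` satisfies `|A| ≤ |W|`: for `e ∈ A \ W`, some edge of `W` separating the ends
of `e` lies outside `A` (as `A - e` does not connect them), and trading it for `e` keeps `W` a
forest with the same connections while making `A \ W` smaller.
-/

open Relation

section Connectivity

variable {V ε : Type*} {ends : ε → V × V}

theorem Joins.symm {e : ε} {u v : V} (h : Joins ends e u v) : Joins ends e v u :=
  Or.symm h

theorem joins_fst_snd (ends : ε → V × V) (e : ε) : Joins ends e (ends e).1 (ends e).2 :=
  Or.inl rfl

theorem Joins.eq_and_eq_or_eq_and_eq {e : ε} {a b c d : V} (h₁ : Joins ends e a b)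
    (h₂ : Joins ends e c d) : a = c ∧ b = d ∨ a = d ∧ b = c := by
  rcases h₁ with h₁ | h₁ <;> rcases h₂ with h₂ | h₂ <;> rw [h₁, Prod.mk.injEq] at h₂ <;> tauto

def AdjIn (ends : ε → V × V) (E : Finset ε) (a b : V) : Prop :=
  ∃ e ∈ E, Joins ends e a b

theorem AdjIn.symm {E : Finset ε} {a b : V} (h : AdjIn ends E a b) : AdjIn ends E b a :=
  let ⟨e, he, hj⟩ := h; ⟨e, he, hj.symm⟩

theorem ConnIn.reflTransGen {E : Finset ε} {x y : V} (h : ConnIn ends E x y) :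
    ReflTransGen (AdjIn ends E) x y := by
  obtain ⟨n, vs, rfl, rfl, hstep⟩ := h
  induction n with
  | zero => exact .refl
  | succ n ih =>
    exact (ih (vs ∘ Fin.castSucc) fun i => hstep i.castSucc).tail (hstep (Fin.last n))

theorem SuppPath.connIn {E : Finset ε} {u v : V} {n : ℕ} (h : SuppPath ends E u v n) :
    ConnIn ends E u v :=
  let ⟨vs, _, h₀, hlast, hstep⟩ := h; ⟨n, vs, h₀, hlast, hstep⟩

theorem exists_suppPath_of_reflTransGen {E : Finset ε} {u v : V}
    (h : ReflTransGen (AdjIn ends E) u v) : ∃ n, SuppPath ends E u v n := by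
  let G := SimpleGraph.fromRel (AdjIn ends E)
  have hreach : G.Reachable u v := by
    induction h with
    | refl => rfl
    | @tail b c _ hbc ih =>
      rcases eq_or_ne b c with rfl | hne
      · exact ih
      · exact ih.trans ((SimpleGraph.fromRel_adj _ b c).2 ⟨hne, .inl hbc⟩).reachable
  obtain ⟨p, hp⟩ := hreach.some.toPath
  refine ⟨p.length, fun i => p.getVert i, fun i j hij => Fin.ext ?_, p.getVert_zero,
    p.getVert_length, fun i => ?_⟩
  · exact hp.getVert_injOn (Nat.lt_succ_iff.1 i.2) (Nat.lt_succ_iff.1 j.2) hij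
  · obtain ⟨-, hadj | hadj⟩ := (SimpleGraph.fromRel_adj _ _ _).1 (p.adj_getVert_succ i.2)
    · exact hadj
    · exact hadj.symm

theorem connIn_iff_reflTransGen {E : Finset ε} {x y : V} :
    ConnIn ends E x y ↔ ReflTransGen (AdjIn ends E) x y :=
  ⟨ConnIn.reflTransGen, fun h => (exists_suppPath_of_reflTransGen h).choose_spec.connIn⟩

theorem ConnIn.exists_suppPath {E : Finset ε} {u v : V} (h : ConnIn ends E u v) :
    ∃ n, SuppPath ends E u v n :=
  exists_suppPath_of_reflTransGen h.reflTransGen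

theorem ConnIn.refl (ends : ε → V × V) (E : Finset ε) (x : V) : ConnIn ends E x x :=
  connIn_iff_reflTransGen.2 .refl

theorem ConnIn.symm {E : Finset ε} {x y : V} (h : ConnIn ends E x y) : ConnIn ends E y x :=
  connIn_iff_reflTransGen.2 <|
    ReflTransGen.mono (fun _ _ => AdjIn.symm) _ _ (ReflTransGen.swap _ _ h.reflTransGen)

theorem ConnIn.trans {E : Finset ε} {x y z : V} (h₁ : ConnIn ends E x y)
    (h₂ : ConnIn ends E y z) : ConnIn ends E x z :=
  connIn_iff_reflTransGen.2 <| h₁.reflTransGen.trans h₂.reflTransGen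

theorem Joins.connIn {E : Finset ε} {e : ε} {a b : V} (he : e ∈ E) (hj : Joins ends e a b) :
    ConnIn ends E a b :=
  connIn_iff_reflTransGen.2 <| .single ⟨e, he, hj⟩

theorem Joins.connIn_iff {E : Finset ε} {e : ε} {a b : V} (hj : Joins ends e a b) :
    ConnIn ends E a b ↔ ConnIn ends E (ends e).1 (ends e).2 := by
  rcases hj with hj | hj <;> rw [hj]
  exact ⟨ConnIn.symm, ConnIn.symm⟩

theorem ConnIn.of_forall_connIn {E E' : Finset ε}
    (h : ∀ e ∈ E, ConnIn ends E' (ends e).1 (ends e).2) {x y : V}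
    (hxy : ConnIn ends E x y) : ConnIn ends E' x y :=
  connIn_iff_reflTransGen.2 <| ReflTransGen.lift' id
    (fun _ _ ⟨e, he, hj⟩ => (hj.connIn_iff.2 (h e he)).reflTransGen) _ _ hxy.reflTransGen

theorem ConnIn.mono {E E' : Finset ε} (hE : E ⊆ E') {x y : V} (h : ConnIn ends E x y) :
    ConnIn ends E' x y :=
  h.of_forall_connIn fun e he => (joins_fst_snd ends e).connIn (hE he)

end Connectivity

section Cycles

variable {V ε : Type*} {ends : ε → V × V}

theorem IsForest.mono {E E' : Finset ε} (h : E ⊆ E') (hE' : IsForest ends E') :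
    IsForest ends E := by
  rintro n hn ⟨vs, es, hvs, hes, hstep⟩
  exact hE' n hn ⟨vs, es, hvs, hes, fun i => ⟨h (hstep i).1, (hstep i).2⟩⟩

-- `ZMod (n + 1)` is `Fin (n + 1)` by definition.
theorem isCycleIn_succ_iff {E : Finset ε} {n : ℕ} :
    IsCycleIn ends E (n + 1) ↔ ∃ (vs : Fin (n + 1) → V) (es : Fin (n + 1) → ε),
      Function.Injective vs ∧ Function.Injective es ∧
        ∀ i, es i ∈ E ∧ Joins ends (es i) (vs i) (vs (i + 1)) :=
  Iff.rfl

theorem injective_of_joins_castSucc_succ {n : ℕ} {vs : Fin (n + 1) → V}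
    {es : Fin n → ε} (hvs : Function.Injective vs)
    (hes : ∀ i, Joins ends (es i) (vs i.castSucc) (vs i.succ)) : Function.Injective es := by
  intro a b hab
  have := hes a
  rw [hab] at this
  rcases this.eq_and_eq_or_eq_and_eq (hes b) with ⟨h, -⟩ | ⟨h₁, h₂⟩
  · exact Fin.castSucc_injective n (hvs h)
  · have h₁ := Fin.val_eq_of_eq (hvs h₁)
    have h₂ := Fin.val_eq_of_eq (hvs h₂)
    simp only [Fin.val_castSucc, Fin.val_succ] at h₁ h₂
    omega

end Cycles

section Forests

variable {V ε : Type*} {ends : ε → V × V} [DecidableEq ε]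

theorem ConnIn.erase_or_exists_inc {E : Finset ε} {x y : V} (f : ε) (h : ConnIn ends E x y) :
    ConnIn ends (E.erase f) x y ∨ ∃ p, Inc ends f p ∧ ConnIn ends (E.erase f) x p := by
  rw [connIn_iff_reflTransGen] at h
  induction h with
  | refl => exact .inl (.refl ends _ x)
  | @tail b c _ hbc ih =>
    refine ih.elim (fun hxb => ?_) .inr
    obtain ⟨e, he, hj⟩ := hbc
    by_cases hef : e = f
    · subst hef
      exact .inr ⟨b, by rcases hj with hj | hj <;> simp [Inc, hj], hxb⟩
    · exact .inl (hxb.trans (hj.connIn (Finset.mem_erase.2 ⟨hef, he⟩)))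

theorem ConnIn.split_of_not_connIn_erase {E : Finset ε} {f : ε} {x y : V}
    (hxy : ConnIn ends E x y) (hsep : ¬ ConnIn ends (E.erase f) x y) :
    ConnIn ends (E.erase f) x (ends f).1 ∧ ConnIn ends (E.erase f) y (ends f).2 ∨
      ConnIn ends (E.erase f) x (ends f).2 ∧ ConnIn ends (E.erase f) y (ends f).1 := by
  obtain ⟨p, hp, hxp⟩ := (hxy.erase_or_exists_inc f).resolve_left hsep
  obtain ⟨q, hq, hyq⟩ := (hxy.symm.erase_or_exists_inc f).resolve_left fun h => hsep h.symm
  have hpq : p ≠ q := by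
    rintro rfl
    exact hsep (hxp.trans hyq.symm)
  rcases hp with rfl | rfl <;> rcases hq with rfl | rfl
  exacts [absurd rfl hpq, .inl ⟨hxp, hyq⟩, .inr ⟨hxp, hyq⟩, absurd rfl hpq]

theorem SuppPath.isCycleIn_insert {E : Finset ε} {g : ε} {u v : V} {n : ℕ}
    (hp : SuppPath ends (E.erase g) u v n) (hg : g ∈ E) (hj : Joins ends g v u) :
    IsCycleIn ends E (n + 1) := by
  obtain ⟨vs, hvs, rfl, rfl, hstep⟩ := hp
  choose es hes hjs using hstep
  refine isCycleIn_succ_iff.2 ⟨vs, Fin.snoc es g, hvs,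
    Fin.snoc_injective_of_injective (injective_of_joins_castSucc_succ hvs hjs) ?_, fun i => ?_⟩
  · rintro ⟨i, hi⟩
    exact Finset.notMem_erase g E (hi ▸ hes i)
  induction i using Fin.lastCases with
  | last => simpa [Fin.last_add_one] using ⟨hg, hj⟩
  | cast i =>
    simpa [Fin.coeSucc_eq_succ] using ⟨Finset.mem_of_mem_erase (hes i), hjs i⟩

theorem IsCycleIn.exists_connIn_erase {E : Finset ε} {n : ℕ} (hn : 1 ≤ n)
    (h : IsCycleIn ends E n) : ∃ e ∈ E, ConnIn ends (E.erase e) (ends e).1 (ends e).2 := by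
  obtain ⟨k, rfl⟩ : ∃ k, n = k + 1 := ⟨n - 1, by omega⟩
  obtain ⟨vs, es, -, hes, hcyc⟩ := isCycleIn_succ_iff.1 h
  refine ⟨es (Fin.last k), (hcyc _).1, ?_⟩
  have hlast := (hcyc (Fin.last k)).2
  rw [Fin.last_add_one] at hlast
  refine hlast.symm.connIn_iff.1 ⟨k, vs, rfl, rfl, fun j => ⟨es j.castSucc, ?_, ?_⟩⟩
  · exact Finset.mem_erase.2 ⟨hes.ne (Fin.castSucc_lt_last j).ne, (hcyc _).1⟩
  · simpa [Fin.coeSucc_eq_succ] using (hcyc j.castSucc).2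

theorem IsForest.not_connIn_erase {E : Finset ε} (hE : IsForest ends E) {e : ε} (he : e ∈ E) :
    ¬ ConnIn ends (E.erase e) (ends e).1 (ends e).2 := fun h =>
  let ⟨n, hp⟩ := h.exists_suppPath
  hE (n + 1) (by omega) (hp.isCycleIn_insert he (joins_fst_snd ends e).symm)

theorem isForest_of_forall_not_connIn_erase {E : Finset ε}
    (h : ∀ e ∈ E, ¬ ConnIn ends (E.erase e) (ends e).1 (ends e).2) : IsForest ends E :=
  fun _ hn hcyc => let ⟨e, he, hconn⟩ := hcyc.exists_connIn_erase hn; h e he hconn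

theorem ConnIn.connIn_ends_of_not_connIn_erase {E E' : Finset ε} {f : ε} {x y : V}
    (hxy : ConnIn ends E x y) (hsep : ¬ ConnIn ends (E.erase f) x y) (hE' : E.erase f ⊆ E')
    (hxy' : ConnIn ends E' x y) : ConnIn ends E' (ends f).1 (ends f).2 := by
  rcases hxy.split_of_not_connIn_erase hsep with ⟨hx, hy⟩ | ⟨hx, hy⟩
  · exact (hx.mono hE').symm.trans (hxy'.trans (hy.mono hE'))
  · exact (hy.mono hE').symm.trans (hxy'.symm.trans (hx.mono hE'))

theorem ConnIn.connIn_fst_of_not_connIn_erase {E : Finset ε} {f : ε} {x y : V} (hf : f ∈ E)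
    (hxy : ConnIn ends E x y) (hsep : ¬ ConnIn ends (E.erase f) x y) :
    ConnIn ends E x (ends f).1 := by
  have hsub := E.erase_subset f
  rcases hxy.split_of_not_connIn_erase hsep with ⟨hx, -⟩ | ⟨hx, -⟩
  · exact hx.mono hsub
  · exact (hx.mono hsub).trans ((joins_fst_snd ends f).connIn hf).symm

theorem IsForest.insert_of_not_connIn {E : Finset ε} (hE : IsForest ends E) {g : ε}
    (hg : ¬ ConnIn ends E (ends g).1 (ends g).2) : IsForest ends (insert g E) := by
  refine isForest_of_forall_not_connIn_erase fun e he hconn => ?_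
  rcases Finset.mem_insert.1 he with rfl | heE
  · rw [Finset.erase_insert_eq_erase] at hconn
    exact hg (hconn.mono (E.erase_subset e))
  have hne : e ≠ g := by
    rintro rfl
    exact hg ((joins_fst_snd ends e).connIn heE)
  rw [Finset.erase_insert_of_ne hne.symm] at hconn
  have hsub : (insert g (E.erase e)).erase g ⊆ E.erase e := by
    rw [Finset.erase_insert_eq_erase]
    exact Finset.erase_subset _ _
  exact hg (hconn.connIn_ends_of_not_connIn_erase (fun h => hE.not_connIn_erase heE (h.mono hsub))
    (hsub.trans (E.erase_subset e)) ((joins_fst_snd ends e).connIn heE))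

/-- In a forest, the edges separating `x` from `y` are those of the `x`–`y` path. -/
noncomputable def separatingEdges (ends : ε → V × V) (E : Finset ε) (x y : V) : Finset ε :=
  E.filter fun f => ¬ ConnIn ends (E.erase f) x y

theorem separatingEdges_erase_subset {E : Finset ε} (hE : IsForest ends E) {f : ε} (hf : f ∈ E)
    {x y : V} (hxy : ConnIn ends (E.erase f) x y) :
    separatingEdges ends (E.erase f) x y ⊆ separatingEdges ends E x y := by
  intro f' hf'
  obtain ⟨hf'E, hsep⟩ := Finset.mem_filter.1 hf'
  refine Finset.mem_filter.2 ⟨Finset.mem_of_mem_erase hf'E, fun hconn => ?_⟩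
  rw [Finset.erase_right_comm] at hsep
  exact hE.not_connIn_erase hf (hconn.connIn_ends_of_not_connIn_erase hsep
    (by rw [Finset.erase_right_comm]; exact Finset.erase_subset _ _) hxy)

theorem connIn_separatingEdges {E : Finset ε} (hE : IsForest ends E) {x y : V}
    (hxy : ConnIn ends E x y) : ConnIn ends (separatingEdges ends E x y) x y := by
  induction E using Finset.strongInduction with
  | H E ih =>
  by_cases hall : ∀ f ∈ E, ¬ ConnIn ends (E.erase f) x y
  · exact hxy.mono fun f hf => Finset.mem_filter.2 ⟨hf, hall f hf⟩
  push Not at hall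
  obtain ⟨f, hf, hconn⟩ := hall
  exact (ih _ (Finset.erase_ssubset hf) (hE.mono (E.erase_subset f)) hconn).mono
    (separatingEdges_erase_subset hE hf hconn)

theorem IsForest.exists_mem_separatingEdges_notMem {A W : Finset ε} (hA : IsForest ends A)
    (hW : IsForest ends W) {e : ε} (heA : e ∈ A) (heW : e ∉ W)
    (hconn : ConnIn ends W (ends e).1 (ends e).2) :
    ∃ f ∈ separatingEdges ends W (ends e).1 (ends e).2, f ∉ A := by
  by_contra! hsub
  refine hA.not_connIn_erase heA ((connIn_separatingEdges hW hconn).mono fun f hf => ?_)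
  exact Finset.mem_erase.2 ⟨fun hfe => heW (hfe ▸ (Finset.mem_filter.1 hf).1), hsub f hf⟩

theorem connIn_insert_erase_of_mem_separatingEdges {W : Finset ε} {e f : ε}
    (hf : f ∈ separatingEdges ends W (ends e).1 (ends e).2)
    (hconn : ConnIn ends W (ends e).1 (ends e).2) {x y : V} (hxy : ConnIn ends W x y) :
    ConnIn ends (insert e (W.erase f)) x y := by
  obtain ⟨hfW, hsep⟩ := Finset.mem_filter.1 hf
  refine hxy.of_forall_connIn fun h hh => ?_
  by_cases hhf : h = f
  · subst hhf
    exact hconn.connIn_ends_of_not_connIn_erase hsep (Finset.subset_insert _ _)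
      ((joins_fst_snd ends e).connIn (Finset.mem_insert_self _ _))
  · exact (joins_fst_snd ends h).connIn
      (Finset.mem_insert_of_mem (Finset.mem_erase.2 ⟨hhf, hh⟩))

theorem IsForest.card_le_of_forall_connIn {A W : Finset ε} (hA : IsForest ends A)
    (hW : IsForest ends W) (hconn : ∀ e ∈ A, ConnIn ends W (ends e).1 (ends e).2) :
    A.card ≤ W.card := by
  induction hk : (A \ W).card using Nat.strong_induction_on generalizing W with
  | _ k ih =>
  by_cases hAW : A ⊆ W
  · exact Finset.card_le_card hAW
  obtain ⟨e, heA, heW⟩ := Finset.not_subset.1 hAW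
  obtain ⟨f, hf, hfA⟩ := hA.exists_mem_separatingEdges_notMem hW heA heW (hconn e heA)
  obtain ⟨hfW, hsep⟩ := Finset.mem_filter.1 hf
  have hW' : IsForest ends (insert e (W.erase f)) :=
    (hW.mono (W.erase_subset f)).insert_of_not_connIn hsep
  have hcard : (insert e (W.erase f)).card = W.card := by
    rw [Finset.card_insert_of_notMem fun h => heW (Finset.mem_of_mem_erase h),
      Finset.card_erase_add_one hfW]
  have hlt : (A \ insert e (W.erase f)).card < k := by
    rw [← hk]
    refine Finset.card_lt_card ⟨fun a ha => ?_, fun h => ?_⟩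
    · simp only [Finset.mem_sdiff, Finset.mem_insert, Finset.mem_erase] at ha ⊢
      exact ⟨ha.1, fun haW => ha.2 (.inr ⟨fun haf => hfA (haf ▸ ha.1), haW⟩)⟩
    · exact (Finset.mem_sdiff.1 (h (Finset.mem_sdiff.2 ⟨heA, heW⟩))).2 (Finset.mem_insert_self e _)
  calc A.card ≤ (insert e (W.erase f)).card := ih _ hlt hW'
        (fun a ha => connIn_insert_erase_of_mem_separatingEdges hf (hconn e heA) (hconn a ha)) rfl
    _ = W.card := hcard

theorem IsForest.card_le_card_biUnion_separatingEdges {A F : Finset ε} (hA : IsForest ends A)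
    (hF : IsForest ends F) (hconn : ∀ e ∈ A, ConnIn ends F (ends e).1 (ends e).2) :
    A.card ≤ (A.biUnion fun e => separatingEdges ends F (ends e).1 (ends e).2).card :=
  hA.card_le_of_forall_connIn
    (hF.mono fun _ hf => (Finset.mem_filter.1 (Finset.mem_biUnion.1 hf).choose_spec.2).1)
    fun e he => (connIn_separatingEdges hF (hconn e he)).mono (Finset.subset_biUnion_of_mem _ he)

end Forests

theorem forest_exchange_in_component_general {V ε : Type*} [DecidableEq ε]
    (ends : ε → V × V)
    (F O : Finset ε) (hF : IsForest ends F) (hO : IsForest ends O)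
    (T : Set V) (x₀ : V)
    (hT : T = {y : V | ConnIn ends F x₀ y})
    (hOT : ∀ e ∈ O, (ends e).1 ∈ T ∧ (ends e).2 ∈ T) :
    ∃ φ : ε → ε, Set.InjOn φ ↑O ∧
      ∀ e ∈ O, φ e ∈ F ∧ (ends (φ e)).1 ∈ T ∧ (ends (φ e)).2 ∈ T ∧
        ConnIn ends F (ends e).1 (ends e).2 ∧
        ¬ ConnIn ends (F.erase (φ e)) (ends e).1 (ends e).2 := by
  subst hT
  have hconn : ∀ e ∈ O, ConnIn ends F (ends e).1 (ends e).2 := fun e he =>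
    (hOT e he).1.symm.trans (hOT e he).2
  obtain ⟨g, hg, hgt⟩ := (Finset.all_card_le_biUnion_card_iff_exists_injective
    fun e : O => separatingEdges ends F (ends e.1).1 (ends e.1).2).1 fun s => by
      have hA : IsForest ends (s.image Subtype.val) := hO.mono (by simp [Finset.image_subset_iff])
      have := hA.card_le_card_biUnion_separatingEdges hF (by simpa using fun e he _ => hconn e he)
      rwa [Finset.image_biUnion, Finset.card_image_of_injective _ Subtype.val_injective] at this
  refine ⟨fun e => if he : e ∈ O then g ⟨e, he⟩ else e, fun a ha b hb hab => ?_, fun e he => ?_⟩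
  · rw [Finset.mem_coe] at ha hb
    simp only [dif_pos ha, dif_pos hb] at hab
    exact congrArg Subtype.val (hg hab)
  obtain ⟨hφF, hsep⟩ := Finset.mem_filter.1 (hgt ⟨e, he⟩)
  have hfst := (hOT e he).1.trans ((hconn e he).connIn_fst_of_not_connIn_erase hφF hsep)
  simp only [dif_pos he]
  exact ⟨hφF, hfst, hfst.trans ((joins_fst_snd ends _).connIn hφF), hconn e he, hsep⟩

/-- Exchange property for forests inside one component: if `F` and `O` are forests and
all edges of `O` lie inside the vertex set `T` of a connected component of `F`, then
there is an injection `φ` from the edges of `O` into the edges of `F` induced on `T`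
such that each edge `e = xy` of `O` is mapped to an edge of `F` lying on the unique
`x`–`y` path in `F` (i.e. an edge whose removal disconnects `x` from `y` in `F`). -/
theorem forest_exchange_in_component {V ε : Type*} [DecidableEq ε]
    (ends : ε → V × V) (hloopless : ∀ e : ε, (ends e).1 ≠ (ends e).2)
    (F O : Finset ε) (hF : IsForest ends F) (hO : IsForest ends O)
    (T : Set V) (x₀ : V) (hx₀ : x₀ ∈ T)
    (hT : T = {y : V | ConnIn ends F x₀ y})
    (hOT : ∀ e ∈ O, (ends e).1 ∈ T ∧ (ends e).2 ∈ T) :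
    ∃ φ : ε → ε, Set.InjOn φ ↑O ∧
      ∀ e ∈ O, φ e ∈ F ∧ (ends (φ e)).1 ∈ T ∧ (ends (φ e)).2 ∈ T ∧
        ConnIn ends F (ends e).1 (ends e).2 ∧
        ¬ ConnIn ends (F.erase (φ e)) (ends e).1 (ends e).2 :=
  forest_exchange_in_component_general ends F O hF hO T x₀ hT hOT
end

section
/- Every g-properly colored branching instance is a Degree Bounded Matroid Independent Set instance with Δ = 3: the feasible arc sets are exactly the independent sets of a matroid (graphic matroid of the underlying graph) satisfying hyperedge bounds in a hypergraph where each arc lies in at most 3 hyperedges, namely δ^in(v) with bound 1 for each vertex v, and δ_{E_i}(v) with bound g_i(v) for each vertex v and color i (where δ counts all incident arcs of color i). -/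
/-!
In a loopless digraph whose in-degrees are at most one, every undirected cycle is a directed
cycle: two consecutive cycle arcs cannot both enter their common vertex, so once one arc is
traversed forwards (after reversing the cycle if necessary), all of them are; loops exclude
cycles of length one. Hence branchings are exactly the forests with in-degrees at most one.
The hyperedge bounds are precisely the in-degree and colour bounds, and an arc `e` lies only in
`δ^in(head e)`, `δ_{E_{c e}}(tail e)` and `δ_{E_{c e}}(head e)`.
-/
open scoped Classical

/-- A cycle of length `n` in the underlying undirected multigraph of the arc set `F`. -/
def IsUCycleIn {V ε : Type*} (tail head : ε → V) (F : Finset ε) (n : ℕ) : Prop :=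
  ∃ (vs : ZMod n → V) (es : ZMod n → ε), Function.Injective vs ∧ Function.Injective es ∧
    ∀ i : ZMod n, es i ∈ F ∧
      ((tail (es i), head (es i)) = (vs i, vs (i + 1)) ∨
        (tail (es i), head (es i)) = (vs (i + 1), vs i))

/-- The underlying edge set of `F` is a forest. -/
def IsUForest {V ε : Type*} (tail head : ε → V) (F : Finset ε) : Prop :=
  ∀ n : ℕ, 1 ≤ n → ¬ IsUCycleIn tail head F n

/-- A directed cycle of length `n` in the arc set `F`. -/
def IsDirCycleIn {V ε : Type*} (tail head : ε → V) (F : Finset ε) (n : ℕ) : Prop :=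
  ∃ (vs : ZMod n → V) (es : ZMod n → ε), Function.Injective vs ∧ Function.Injective es ∧
    ∀ i : ZMod n, es i ∈ F ∧ tail (es i) = vs i ∧ head (es i) = vs (i + 1)

/-- `F` is a branching: every vertex has in-degree at most one and `F` has no directed
cycle (equivalently, `F` is a union of vertex-disjoint arborescences). -/
def IsBranching {V ε : Type*} [DecidableEq ε] (tail head : ε → V) (F : Finset ε) : Prop :=
  (∀ v : V, (F.filter (fun e => head e = v)).card ≤ 1) ∧
    ∀ n : ℕ, 1 ≤ n → ¬ IsDirCycleIn tail head F n

/-- The hyperedges of the DBMIS instance associated with `g`-properly colored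
branchings: `δ^in(v)` for each vertex `v`, and `δ_{E_i}(v)` for each vertex `v` and
color `i`. -/
def branchingHyp {V ε C : Type*} (tail head : ε → V) (c : ε → C) :
    V ⊕ (V × C) → Set ε
  | Sum.inl v => {e | head e = v}
  | Sum.inr (v, i) => {e | c e = i ∧ (tail e = v ∨ head e = v)}

/-- The bounds of the DBMIS instance: `1` on each `δ^in(v)` and `g i v` on `δ_{E_i}(v)`. -/
def branchingBound {V C : Type*} (g : C → V → ℕ) : V ⊕ (V × C) → ℕ
  | Sum.inl _ => 1
  | Sum.inr (v, i) => g i v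

section Cycles

variable {V ε : Type*} {tail head : ε → V} {F : Finset ε}

theorem injOn_head_of_inDegree_le_one
    (hdeg : ∀ v : V, (F.filter (fun e => head e = v)).card ≤ 1) :
    Set.InjOn head F := fun e he e' he' h =>
  Finset.card_le_one.1 (hdeg (head e)) e (by simpa using he) e' (by simpa [h] using he')

theorem IsDirCycleIn.isUCycleIn {n : ℕ} (h : IsDirCycleIn tail head F n) :
    IsUCycleIn tail head F n := by
  obtain ⟨vs, es, hvs, hes, hmem⟩ := h
  exact ⟨vs, es, hvs, hes, fun i =>
    ⟨(hmem i).1, Or.inl (by rw [(hmem i).2.1, (hmem i).2.2])⟩⟩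

variable {n : ℕ} {vs : ZMod n → V} {es : ZMod n → ε}

theorem isDirCycleIn_of_forward [Fact (1 < n)] (hhead : Set.InjOn head F)
    (hvs : Function.Injective vs) (hes : Function.Injective es)
    (hmem : ∀ i : ZMod n, es i ∈ F ∧
      ((tail (es i), head (es i)) = (vs i, vs (i + 1)) ∨
        (tail (es i), head (es i)) = (vs (i + 1), vs i)))
    {j : ZMod n} (hj : (tail (es j), head (es j)) = (vs j, vs (j + 1))) :
    IsDirCycleIn tail head F n := by
  have step : ∀ i : ZMod n, (tail (es i), head (es i)) = (vs i, vs (i + 1)) →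
      (tail (es (i + 1)), head (es (i + 1))) = (vs (i + 1), vs (i + 1 + 1)) := by
    intro i hi
    refine (hmem (i + 1)).2.resolve_right fun hback => ?_
    have hsame : es i = es (i + 1) :=
      hhead (hmem i).1 (hmem (i + 1)).1 ((Prod.ext_iff.1 hi).2.trans (Prod.ext_iff.1 hback).2.symm)
    simpa using hes hsame
  have hforward : ∀ k : ℕ,
      (tail (es (j + k)), head (es (j + k))) = (vs (j + k), vs (j + k + 1)) := by
    intro k
    induction k with
    | zero => simpa using hj
    | succ k ih => simpa [add_assoc] using step _ ih
  refine ⟨vs, es, hvs, hes, fun i => ⟨(hmem i).1, ?_⟩⟩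
  have h := hforward (i - j).val
  rw [ZMod.natCast_zmod_val, add_sub_cancel] at h
  exact Prod.ext_iff.1 h

theorem uCycle_reverse
    (hmem : ∀ i : ZMod n, es i ∈ F ∧
      ((tail (es i), head (es i)) = (vs i, vs (i + 1)) ∨
        (tail (es i), head (es i)) = (vs (i + 1), vs i)))
    (i : ZMod n) : es (-i - 1) ∈ F ∧
      ((tail (es (-i - 1)), head (es (-i - 1))) = (vs (-i), vs (-(i + 1))) ∨
        (tail (es (-i - 1)), head (es (-i - 1))) = (vs (-(i + 1)), vs (-i))) := by
  have h1 : -i - 1 + 1 = -i := by ring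
  have h2 : -i - 1 = -(i + 1) := by ring
  rw [← h2]
  simpa only [h1, or_comm] using hmem (-i - 1)

theorem IsUCycleIn.isDirCycleIn (hloop : ∀ e : ε, tail e ≠ head e) (hhead : Set.InjOn head F)
    (hn : 1 ≤ n) (h : IsUCycleIn tail head F n) : IsDirCycleIn tail head F n := by
  obtain ⟨vs, es, hvs, hes, hmem⟩ := h
  obtain rfl | hn := hn.eq_or_lt
  · have hloop0 : (0 + 1 : ZMod 1) = 0 := Subsingleton.elim _ _
    rcases (hmem 0).2 with h | h <;>
      exact (hloop (es 0) (by rw [hloop0] at h; simp_all)).elim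
  have : Fact (1 < n) := ⟨hn⟩
  rcases (hmem 0).2 with hfwd | hback
  · exact isDirCycleIn_of_forward hhead hvs hes hmem hfwd
  · refine isDirCycleIn_of_forward (vs := fun i => vs (-i)) (es := fun i => es (-i - 1)) (j := -1)
      hhead (hvs.comp neg_injective) (fun a b hab => by simpa using hes hab)
      (uCycle_reverse hmem) ?_
    simpa using hback

end Cycles

theorem isBranching_iff_isUForest {V ε : Type*} [DecidableEq ε] {tail head : ε → V}
    (hloop : ∀ e : ε, tail e ≠ head e) {F : Finset ε} :
    IsBranching tail head F ↔
      (∀ v : V, (F.filter (fun e => head e = v)).card ≤ 1) ∧ IsUForest tail head F := by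
  refine and_congr_right fun hdeg => forall₂_congr fun n hn => not_congr
    ⟨IsDirCycleIn.isUCycleIn,
      IsUCycleIn.isDirCycleIn hloop (injOn_head_of_inDegree_le_one hdeg) hn⟩

section Hypergraph

variable {V ε C : Type*} (tail head : ε → V) (c : ε → C)

theorem forall_card_filter_branchingHyp_le_iff (g : C → V → ℕ) (F : Finset ε) :
    (∀ idx : V ⊕ (V × C),
        (F.filter (fun e => e ∈ branchingHyp tail head c idx)).card ≤ branchingBound g idx) ↔
      (∀ v : V, (F.filter (fun e => head e = v)).card ≤ 1) ∧
        ∀ v : V, ∀ i : C,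
          (F.filter (fun e => c e = i ∧ (tail e = v ∨ head e = v))).card ≤ g i v := by
  rw [Sum.forall, Prod.forall]
  exact and_congr Iff.rfl (forall₂_congr fun v i => by
    rw [branchingBound, ← Finset.filter_congr_decidable]; rfl)

theorem ncard_branchingHyp_le_three (e : ε) :
    Set.ncard {idx : V ⊕ (V × C) | e ∈ branchingHyp tail head c idx} ≤ 3 := by
  have hsub : {idx : V ⊕ (V × C) | e ∈ branchingHyp tail head c idx} ⊆
      ↑({Sum.inl (head e), Sum.inr (tail e, c e), Sum.inr (head e, c e)} :
        Finset (V ⊕ (V × C))) := by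
    rintro (v | ⟨v, i⟩) h
    · simp_all [branchingHyp]
    · obtain ⟨rfl, rfl | rfl⟩ := h <;> simp
  calc _ ≤ _ := Set.ncard_le_ncard hsub (Finset.finite_toSet _)
    _ ≤ 3 := (Set.ncard_coe_finset _).trans_le Finset.card_le_three

end Hypergraph

/-- Every `g`-properly colored branching instance is a DBMIS instance with `Δ = 3`: the
`g`-properly colored branchings are exactly the independent sets of the graphic matroid
of the underlying graph (forests) satisfying the hyperedge bounds `|F ∩ δ^in(v)| ≤ 1`
and `|F ∩ δ_{E_i}(v)| ≤ g i v`, and every arc lies in at most `3` hyperedges. -/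
theorem gProperColoredBranching_dbmis {V ε C : Type*} [DecidableEq ε]
    (tail head : ε → V) (hloopless : ∀ e : ε, tail e ≠ head e)
    (c : ε → C) (g : C → V → ℕ) :
    (∀ F : Finset ε,
      (IsBranching tail head F ∧
          ∀ v : V, ∀ i : C,
            (F.filter (fun e => c e = i ∧ (tail e = v ∨ head e = v))).card ≤ g i v) ↔
        (IsUForest tail head F ∧
          ∀ idx : V ⊕ (V × C),
            (F.filter (fun e => e ∈ branchingHyp tail head c idx)).card ≤
              branchingBound g idx)) ∧
    (∀ e : ε, Set.ncard {idx : V ⊕ (V × C) | e ∈ branchingHyp tail head c idx} ≤ 3) := by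
  refine ⟨fun F => ?_, ncard_branchingHyp_le_three tail head c⟩
  rw [isBranching_iff_isUForest hloopless, forall_card_filter_branchingHyp_le_iff]
  tauto
end

section
/- Correctness of the b-matching reduction: a set F ⊆ E of the original edge-colored graph is a g-properly colored b-matching if and only if the corresponding edge set F' = {u^e v^e : e = uv ∈ F} of the auxiliary graph satisfies all hierarchical degree constraints: for every vertex v and color i, the number of F'-edges incident to vertices of L_{v,i} is at most g_i(v), and for every vertex v, the total number of F'-edges incident to copies of v is at most b(v); moreover the weights agree, w'(F') = w(F). -/
open scoped Classical

/-- The set `L_{v,i}` of copies `v^e` (encoded as pairs `(v, e)`) for the edges `e` of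
color `i` incident to `v`. -/
def Lset {V ε C : Type*} (ends : ε → V × V) (c : ε → C) (v : V) (i : C) :
    Set (V × ε) :=
  {p | p.1 = v ∧ Inc ends p.2 v ∧ c p.2 = i}

/-- `F` is a `g`-properly colored `b`-matching: at most `b v` edges of `F` at every
vertex `v` and at most `g i v` edges of `F` of color `i` at every vertex `v`. -/
def GPCbMatching {V ε C : Type*} (ends : ε → V × V) (c : ε → C)
    (b : V → ℕ) (g : C → V → ℕ) (F : Finset ε) : Prop :=
  (∀ v : V, (F.filter (fun e => Inc ends e v)).card ≤ b v) ∧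
  (∀ v : V, ∀ i : C, (F.filter (fun e => c e = i ∧ Inc ends e v)).card ≤ g i v)

/-- The auxiliary edge `u^e v^e` of the hierarchical `b`-matching instance
corresponding to the edge `e = uv`. -/
def auxEdge {V ε : Type*} (ends : ε → V × V) (e : ε) : (V × ε) × (V × ε) :=
  (((ends e).1, e), ((ends e).2, e))

/-- The weight of an auxiliary edge, `w'(u^e v^e) = w(e)`. -/
def auxWeight {V ε : Type*} (w : ε → ℝ) (p : (V × ε) × (V × ε)) : ℝ := w p.1.2

/-- Correctness of the `b`-matching reduction: `F` is a `g`-properly colored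
`b`-matching iff the corresponding auxiliary edge set `F' = {u^e v^e : e ∈ F}`
satisfies all hierarchical degree constraints (at most `g i v` auxiliary edges meet
`L_{v,i}`, and at most `b v` auxiliary edges meet copies of `v`); moreover the weights
agree: `w'(F') = w(F)`. -/
theorem bMatching_reduction_correct {V ε C : Type*} [DecidableEq ε]
    (ends : ε → V × V) (hloopless : ∀ e : ε, (ends e).1 ≠ (ends e).2)
    (c : ε → C) (b : V → ℕ) (g : C → V → ℕ) (w : ε → ℝ) :
    (∀ F : Finset ε,
      GPCbMatching ends c b g F ↔
        ((∀ v : V, ∀ i : C,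
            (F.filter (fun e => (auxEdge ends e).1 ∈ Lset ends c v i ∨
              (auxEdge ends e).2 ∈ Lset ends c v i)).card ≤ g i v) ∧
          (∀ v : V,
            (F.filter (fun e => (auxEdge ends e).1.1 = v ∨
              (auxEdge ends e).2.1 = v)).card ≤ b v))) ∧
    (∀ F : Finset ε, ∑ e ∈ F, auxWeight w (auxEdge ends e) = ∑ e ∈ F, w e) := by
  constructor
  · intro F
    have hb : ∀ v e, ((auxEdge ends e).1.1 = v ∨ (auxEdge ends e).2.1 = v) ↔ Inc ends e v := by
      intro v e; simp [auxEdge, Inc]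
    have hg : ∀ v i e, ((auxEdge ends e).1 ∈ Lset ends c v i ∨
        (auxEdge ends e).2 ∈ Lset ends c v i) ↔ (c e = i ∧ Inc ends e v) := by
      intro v i e
      simp only [auxEdge, Lset, Set.mem_setOf_eq, Inc]
      constructor
      · rintro (⟨h1, _, h3⟩ | ⟨h1, _, h3⟩)
        · exact ⟨h3, Or.inl h1⟩
        · exact ⟨h3, Or.inr h1⟩
      · rintro ⟨hc, h1 | h1⟩
        · exact Or.inl ⟨h1, Or.inl h1, hc⟩
        · exact Or.inr ⟨h1, Or.inr h1, hc⟩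
    constructor
    · rintro ⟨hB, hG⟩
      constructor
      · intro v i
        calc (F.filter (fun e => (auxEdge ends e).1 ∈ Lset ends c v i ∨
              (auxEdge ends e).2 ∈ Lset ends c v i)).card
            = (F.filter (fun e => c e = i ∧ Inc ends e v)).card := by
              congr 1; apply Finset.filter_congr; intro e _; simp [hg v i e]
          _ ≤ g i v := hG v i
      · intro v
        calc (F.filter (fun e => (auxEdge ends e).1.1 = v ∨ (auxEdge ends e).2.1 = v)).card
            = (F.filter (fun e => Inc ends e v)).card := by
              congr 1; apply Finset.filter_congr; intro e _; simp [hb v e]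
          _ ≤ b v := hB v
    · rintro ⟨hG, hB⟩
      constructor
      · intro v
        calc (F.filter (fun e => Inc ends e v)).card
            = (F.filter (fun e => (auxEdge ends e).1.1 = v ∨ (auxEdge ends e).2.1 = v)).card := by
              congr 1; apply Finset.filter_congr; intro e _; simp [hb v e]
          _ ≤ b v := hB v
      · intro v i
        calc (F.filter (fun e => c e = i ∧ Inc ends e v)).card
            = (F.filter (fun e => (auxEdge ends e).1 ∈ Lset ends c v i ∨
              (auxEdge ends e).2 ∈ Lset ends c v i)).card := by
              congr 1; apply Finset.filter_congr; intro e _; simp [hg v i e]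
          _ ≤ g i v := hG v i
  · intro F
    simp [auxWeight, auxEdge]
end

section
/- Each element of a DBMIS feasible-set violation can be repaired by at most Δ+1 deletions: let S be feasible (independent in M, satisfying all hyperedge bounds g), and let x ∉ S with {x} feasible. Then there is a set Z ⊆ S with |Z| ≤ Δ+1 such that (S + x) \ Z is feasible: remove one element from each of the at most Δ tight hyperedges containing x, and at most one further element to restore matroid independence. -/
open scoped Classical

/-!
Let `T` be the set of hyperedges containing `x` that are tight for `S`. Each of them meets `S`,
since feasibility of `{x}` forces `g e ≥ 1`, so deleting one element of `S ∩ e` for every `e ∈ T`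
(at most `Δ` deletions) makes room for `x` in every hyperedge. If `S + x` is dependent, its unique
circuit passes through `x` and, `x` not being a loop, through some `y ∈ S`; deleting `y` as well
restores independence.
-/

namespace Matroid.Indep

variable {α : Type*} {M : Matroid α}

lemma exists_mem_indep_insert_sdiff_singleton {I : Set α} {x : α} (hI : M.Indep I)
    (hx : M.Indep {x}) (hdep : ¬ M.Indep (insert x I)) :
    ∃ y ∈ I, M.Indep (insert x I \ {y}) := by
  have hxI : x ∉ I := fun h ↦ hdep (by rwa [Set.insert_eq_of_mem h])
  have hxcl : x ∈ M.closure I := by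
    by_contra h
    exact hdep ((hI.notMem_closure_iff_of_notMem hxI (hx.subset_ground rfl)).1 h)
  obtain ⟨y, hyC, hyx⟩ : ∃ y ∈ M.fundCircuit x I, y ≠ x := by
    by_contra! h
    exact (hI.fundCircuit_isCircuit hxcl hxI).not_indep (hx.subset h)
  refine ⟨y, ?_, (hI.mem_fundCircuit_iff hxcl hxI).1 hyC⟩
  exact (Set.mem_insert_iff.1 (M.fundCircuit_subset_insert x I hyC)).resolve_left hyx

lemma exists_card_le_one_indep_insert_sdiff [DecidableEq α] {S : Finset α} {x : α}
    (hS : M.Indep ↑S) (hx : M.Indep {x}) :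
    ∃ Y ⊆ S, Y.card ≤ 1 ∧ M.Indep ↑(insert x S \ Y) := by
  by_cases hins : M.Indep (insert x ↑S)
  · exact ⟨∅, Finset.empty_subset S, by simp, by simpa using hins⟩
  obtain ⟨y, hyS, hind⟩ := hS.exists_mem_indep_insert_sdiff_singleton hx hins
  exact ⟨{y}, by simpa using hyS, by simp, by simpa using hind⟩

end Matroid.Indep

namespace Finset

variable {V : Type*} [DecidableEq V]

lemma exists_subset_card_le_forall_inter_nonempty (S : Finset V) (T : Finset (Finset V))
    (hT : ∀ e ∈ T, (S ∩ e).Nonempty) :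
    ∃ W ⊆ S, W.card ≤ T.card ∧ ∀ e ∈ T, (W ∩ e).Nonempty := by
  choose pick hpick using hT
  refine ⟨T.attach.image fun e ↦ pick e.1 e.2, ?_, card_image_le.trans_eq card_attach,
    fun e he ↦ ⟨pick e he, ?_⟩⟩
  · simp only [image_subset_iff]
    exact fun e _ ↦ (mem_inter.1 (hpick e.1 e.2)).1
  · exact mem_inter.2 ⟨mem_image.2 ⟨⟨e, he⟩, mem_attach T _, rfl⟩, (mem_inter.1 (hpick e he)).2⟩

lemma card_insert_sdiff_inter_le {S Z e : Finset V} {x : V} {b : ℕ} (hSe : (S ∩ e).card ≤ b)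
    (htight : x ∈ e → (S ∩ e).card = b → ∃ z ∈ Z, z ∈ S ∩ e) :
    ((insert x S \ Z) ∩ e).card ≤ b := by
  have hsub : (insert x S \ Z) ∩ e ⊆ insert x (S ∩ e) \ Z := by
    intro v
    simp only [mem_inter, mem_sdiff, mem_insert]
    tauto
  by_cases hxe : x ∈ e
  · by_cases hb : (S ∩ e).card = b
    · obtain ⟨z, hzZ, hzSe⟩ := htight hxe hb
      calc ((insert x S \ Z) ∩ e).card ≤ ((insert x (S ∩ e)).erase z).card :=
            card_le_card (hsub.trans fun v hv ↦ mem_erase.2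
              ⟨fun h ↦ (mem_sdiff.1 hv).2 (h ▸ hzZ), (mem_sdiff.1 hv).1⟩)
        _ = (insert x (S ∩ e)).card - 1 := card_erase_of_mem (mem_insert_of_mem hzSe)
        _ ≤ b := by have := card_insert_le x (S ∩ e); omega
    · calc ((insert x S \ Z) ∩ e).card ≤ (insert x (S ∩ e)).card :=
            card_le_card (hsub.trans sdiff_subset)
        _ ≤ b := (card_insert_le x (S ∩ e)).trans (by omega)
  · refine (card_le_card fun v ↦ ?_).trans hSe
    simp only [mem_inter, mem_sdiff, mem_insert]
    rintro ⟨⟨rfl | hvS, -⟩, hve⟩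
    exacts [absurd hve hxe, ⟨hvS, hve⟩]

end Finset

-- `DBMISFeasible` is elaborated with the classical `DecidableEq` instance; this reads it with any.
lemma dbmisFeasible_iff_s19 {V : Type*} [DecidableEq V] {M : Matroid V} {H : Finset (Finset V)}
    {g : Finset V → ℕ} {S : Finset V} :
    DBMISFeasible M H g S ↔ M.Indep ↑S ∧ ∀ e ∈ H, (S ∩ e).card ≤ g e := by
  unfold DBMISFeasible
  congr!

theorem dbmis_repair_general {V : Type*} [DecidableEq V] (M : Matroid V)
    (H : Finset (Finset V)) (g : Finset V → ℕ) (Δ : ℕ) (S : Finset V) (x : V)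
    (hdegx : (H.filter (fun e => x ∈ e)).card ≤ Δ)
    (hS : DBMISFeasible M H g S)
    (hxfeas : DBMISFeasible M H g {x}) :
    ∃ Z ⊆ S, Z.card ≤ Δ + 1 ∧ DBMISFeasible M H g ((insert x S) \ Z) := by
  rw [dbmisFeasible_iff_s19] at hS hxfeas
  obtain ⟨hSind, hSdeg⟩ := hS
  set T := H.filter (fun e => x ∈ e ∧ (S ∩ e).card = g e)
  have hT : ∀ e ∈ T, (S ∩ e).Nonempty := by
    intro e he
    obtain ⟨he, hxe, htight⟩ := Finset.mem_filter.1 he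
    have := hxfeas.2 e he
    rw [Finset.singleton_inter_of_mem hxe, Finset.card_singleton] at this
    rw [← Finset.card_pos, htight]
    omega
  obtain ⟨W, hWS, hWcard, hWT⟩ := S.exists_subset_card_le_forall_inter_nonempty T hT
  obtain ⟨Y, hYS, hYcard, hYind⟩ :=
    hSind.exists_card_le_one_indep_insert_sdiff (by simpa using hxfeas.1)
  have hTΔ : T.card ≤ Δ :=
    (Finset.card_le_card (Finset.monotone_filter_right H fun _ _ h ↦ h.1)).trans hdegx
  refine ⟨W ∪ Y, Finset.union_subset hWS hYS, ?_, ?_⟩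
  · calc (W ∪ Y).card ≤ W.card + Y.card := Finset.card_union_le W Y
      _ ≤ Δ + 1 := by omega
  rw [dbmisFeasible_iff_s19]
  refine ⟨hYind.subset (by gcongr; exact Finset.subset_union_right), fun e he ↦ ?_⟩
  refine Finset.card_insert_sdiff_inter_le (hSdeg e he) fun hxe htight ↦ ?_
  obtain ⟨w, hw⟩ := hWT e (Finset.mem_filter.2 ⟨he, hxe, htight⟩)
  obtain ⟨hwW, hwe⟩ := Finset.mem_inter.1 hw
  exact ⟨w, Finset.mem_union_left Y hwW, Finset.mem_inter.2 ⟨hWS hwW, hwe⟩⟩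

/-- Adding an element to a feasible set can be repaired by at most `Δ + 1` deletions:
if `S` is feasible, `x ∉ S`, `{x}` is feasible and `x` lies in at most `Δ` hyperedges,
then there is `Z ⊆ S` with `|Z| ≤ Δ + 1` such that `(S + x) \ Z` is feasible. -/
theorem dbmis_repair {V : Type*} [DecidableEq V] (M : Matroid V)
    (H : Finset (Finset V)) (g : Finset V → ℕ) (Δ : ℕ) (S : Finset V) (x : V)
    (hdegx : (H.filter (fun e => x ∈ e)).card ≤ Δ)
    (hS : DBMISFeasible M H g S) (hx : x ∉ S)
    (hxfeas : DBMISFeasible M H g {x}) :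
    ∃ Z ⊆ S, Z.card ≤ Δ + 1 ∧ DBMISFeasible M H g ((insert x S) \ Z) :=
  dbmis_repair_general M H g Δ S x hdegx hS hxfeas
end
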